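/- arXiv:1704.06943 — 10 statements merged into one kernel-verified Lean document; each statement's English description precedes it below -/
import Mathlib

section
/- Let m ≥ 0 be a real number. The function F₁(x) = (x+m)^x / (x−1+m)^{x−1} is strictly increasing where defined; that is, for all real numbers x, y with 1 ≤ x < y and x − 1 + m > 0, one has (x+m)^x / (x−1+m)^{x−1} < (y+m)^y / (y−1+m)^{y−1}. -/
/-! Writing `φ t = t * log (t + m)`, the function is `exp (φ t - φ (t - 1))`. Since
`φ' t = log (t + m) + 1 - m / (t + m)` is strictly increasing for `m ≥ 0`, the difference
`φ t - φ (t - 1)` has positive derivative `φ' t - φ' (t - 1)`. -/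

open Real Set

theorem strictMonoOn_sub_comp_sub_of_deriv {φ φ' : ℝ → ℝ} {a c : ℝ} (hc : 0 < c)
    (hφ : ∀ t ∈ Ioi a, HasDerivAt φ (φ' t) t) (hφ' : StrictMonoOn φ' (Ioi a)) :
    StrictMonoOn (fun t => φ t - φ (t - c)) (Ioi (a + c)) := by
  have hderiv : ∀ t ∈ Ioi (a + c),
      HasDerivAt (fun t => φ t - φ (t - c)) (φ' t - φ' (t - c)) t := fun t (ht : a + c < t) =>
    (hφ t (show a < t by linarith)).sub
      ((hφ (t - c) (show a < t - c by linarith)).comp_sub_const t c)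
  refine strictMonoOn_of_deriv_pos (convex_Ioi _)
    (fun t ht => (hderiv t ht).continuousAt.continuousWithinAt) fun t ht => ?_
  rw [interior_Ioi] at ht
  have ht' : a + c < t := ht
  rw [(hderiv t ht).deriv, sub_pos]
  exact hφ' (show a < t - c by linarith) (show a < t by linarith) (by linarith)

theorem hasDerivAt_mul_log_add {m t : ℝ} (ht : 0 < t + m) :
    HasDerivAt (fun s => s * log (s + m)) (log (t + m) + t / (t + m)) t := by
  simpa only [one_mul, mul_one_div] using
    (hasDerivAt_id' t).fun_mul (((hasDerivAt_id' t).add_const m).log ht.ne')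

theorem strictMonoOn_log_add_add_div {m : ℝ} (hm : 0 ≤ m) :
    StrictMonoOn (fun t => log (t + m) + t / (t + m)) (Ioi (-m)) := by
  intro s hs t ht hst
  have hs : 0 < s + m := neg_lt_iff_pos_add.mp hs
  have ht : 0 < t + m := neg_lt_iff_pos_add.mp ht
  have hlog : log (s + m) < log (t + m) := log_lt_log hs (by linarith)
  have hdiv : s / (s + m) ≤ t / (t + m) := by
    rw [div_le_div_iff₀ hs ht]
    nlinarith
  dsimp only
  linarith

theorem rpow_div_rpow_sub_one_eq_exp {m t : ℝ} (ht : 0 < t - 1 + m) :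
    (t + m) ^ t / (t - 1 + m) ^ (t - 1) = exp (t * log (t + m) - (t - 1) * log (t - 1 + m)) := by
  rw [rpow_def_of_pos (by linarith), rpow_def_of_pos ht, ← exp_sub]
  ring_nf

theorem strictMonoOn_rpow_div_rpow_sub_one {m : ℝ} (hm : 0 ≤ m) :
    StrictMonoOn (fun t => (t + m) ^ t / (t - 1 + m) ^ (t - 1)) (Ioi (1 - m)) := by
  have hdiff : StrictMonoOn (fun t => t * log (t + m) - (t - 1) * log (t - 1 + m))
      (Ioi (-m + 1)) :=
    strictMonoOn_sub_comp_sub_of_deriv one_pos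
      (fun _ ht => hasDerivAt_mul_log_add (neg_lt_iff_pos_add.mp ht))
      (strictMonoOn_log_add_add_div hm)
  rw [neg_add_eq_sub] at hdiff
  exact (exp_strictMono.comp_strictMonoOn hdiff).congr fun t (ht : 1 - m < t) =>
    (rpow_div_rpow_sub_one_eq_exp (by linarith)).symm

theorem prop_F1_strictMono_general (m : ℝ) (hm : 0 ≤ m) (x y : ℝ)
    (hxy : x < y) (hpos : 0 < x - 1 + m) :
    (x + m) ^ x / (x - 1 + m) ^ (x - 1) < (y + m) ^ y / (y - 1 + m) ^ (y - 1) :=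
  strictMonoOn_rpow_div_rpow_sub_one hm (show 1 - m < x by linarith)
    (show 1 - m < y by linarith) hxy

/-- **Proposition 1 (Wang).** For a real number `m ≥ 0`, the function
`F₁(x) = (x+m)^x / (x-1+m)^(x-1)` (real powers) is strictly increasing where it
is defined, i.e. for `1 ≤ x < y` with `x - 1 + m > 0`. -/
theorem prop_F1_strictMono (m : ℝ) (hm : 0 ≤ m) (x y : ℝ)
    (hx : 1 ≤ x) (hxy : x < y) (hpos : 0 < x - 1 + m) :
    (x + m) ^ x / (x - 1 + m) ^ (x - 1) < (y + m) ^ y / (y - 1 + m) ^ (y - 1) :=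
  prop_F1_strictMono_general m hm x y hxy hpos
end

section
/- Let m > 0 be a real number. The function F₂(x) = x^x / (x+m)^{x+m} is strictly decreasing on (0,∞); that is, for all real numbers x, y with 0 < x < y, one has y^y / (y+m)^{y+m} < x^x / (x+m)^{x+m}. -/
/-! Writing `t ^ t = exp (t log t)`, the quotient is `exp (t log t - (t + m) log (t + m))`.
The exponent has derivative `log t - log (t + m) < 0`, so it is strictly decreasing. -/

open Real Set

namespace Real

lemma hasDerivAt_mul_log_sub_add_mul_log {m t : ℝ} (ht : t ≠ 0) (htm : t + m ≠ 0) :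
    HasDerivAt (fun t ↦ t * log t - (t + m) * log (t + m)) (log t - log (t + m)) t := by
  simpa using (hasDerivAt_mul_log ht).fun_sub ((hasDerivAt_mul_log htm).comp_add_const t m)

lemma strictAntiOn_mul_log_sub_add_mul_log {m : ℝ} (hm : 0 < m) :
    StrictAntiOn (fun t ↦ t * log t - (t + m) * log (t + m)) (Ici 0) := by
  refine strictAntiOn_of_hasDerivWithinAt_neg (f' := fun t ↦ log t - log (t + m)) (convex_Ici 0)
    (by fun_prop) (fun t ht ↦ ?_) (fun t ht ↦ ?_) <;>
    obtain ht : 0 < t := by rwa [interior_Ici] at ht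
  · exact (hasDerivAt_mul_log_sub_add_mul_log ht.ne' (by linarith)).hasDerivWithinAt
  · exact sub_neg.mpr (log_lt_log ht (by linarith))

lemma rpow_self_div_rpow_self_eq_exp {m t : ℝ} (ht : 0 < t) (htm : 0 < t + m) :
    t ^ t / (t + m) ^ (t + m) = exp (t * log t - (t + m) * log (t + m)) := by
  rw [rpow_def_of_pos ht, rpow_def_of_pos htm, ← exp_sub, mul_comm (log t), mul_comm (log _)]

end Real

/-- **Proposition 2 (Wang).** For a real number `m > 0`, the function
`F₂(x) = x^x / (x+m)^(x+m)` (real powers) is strictly decreasing on `(0, ∞)`. -/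
theorem prop_F2_strictAnti (m : ℝ) (hm : 0 < m) (x y : ℝ)
    (hx : 0 < x) (hxy : x < y) :
    y ^ y / (y + m) ^ (y + m) < x ^ x / (x + m) ^ (x + m) := by
  have hy : 0 < y := hx.trans hxy
  rw [rpow_self_div_rpow_self_eq_exp hx (by linarith),
    rpow_self_div_rpow_self_eq_exp hy (by linarith), exp_lt_exp]
  exact strictAntiOn_mul_log_sub_add_mul_log hm hx.le hy.le hxy
end

section
/- Let n, k, j be natural numbers with k ≥ 1, 2 ≤ j, and 2j ≤ n − k, and let H be any finite simple graph on k vertices. Then Π₁(G(j, n−k−j)) < Π₁(G(1, n−k−1)), where both graphs are built from the same graph H. -/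
/-- The first multiplicative Zagreb index `Π₁(G) = ∏_{u ∈ V(G)} d(u)²`. -/
noncomputable def multZagreb1 {V : Type*} [Fintype V] (G : SimpleGraph V) : ℕ :=
  letI := Classical.decRel G.Adj
  ∏ v : V, (G.degree v) ^ 2

/-- The join `G(j, l) = K_j ⊕ H ⊕ K_l`: disjoint copies of the complete graphs
`K_j`, `K_l` and of the graph `H`, together with all edges between `K_j` and `H`
and all edges between `H` and `K_l` (and no edges between `K_j` and `K_l`). -/
def joinCliques {W : Type*} (H : SimpleGraph W) (j l : ℕ) :
    SimpleGraph (Fin j ⊕ (W ⊕ Fin l)) :=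
  SimpleGraph.fromRel (fun x y =>
    match x, y with
    | Sum.inl _, Sum.inl _ => True
    | Sum.inl _, Sum.inr (Sum.inl _) => True
    | Sum.inr (Sum.inl w), Sum.inr (Sum.inl w') => H.Adj w w'
    | Sum.inr (Sum.inl _), Sum.inr (Sum.inr _) => True
    | Sum.inr (Sum.inr _), Sum.inr (Sum.inr _) => True
    | _, _ => False)

open Finset
open scoped Classical

section ArithAux

lemma wangBoundM (M : ℕ) : ∀ a, a ≤ M → (M+1)^a * (M-a) ≤ M^(a+1) := by
  intro a
  induction a with
  | zero => intro _; simp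
  | succ a ih =>
    intro h
    have h1 : (M+1) * (M-(a+1)) ≤ (M-a) * M := by
      obtain ⟨b, rfl⟩ : ∃ b, M = a + 1 + b := ⟨M - (a+1), by omega⟩
      have e1 : a + 1 + b - (a+1) = b := by omega
      have e2 : a + 1 + b - a = b + 1 := by omega
      rw [e1, e2]; nlinarith
    calc (M+1)^(a+1) * (M-(a+1)) = (M+1)^a * ((M+1) * (M-(a+1))) := by ring
      _ ≤ (M+1)^a * ((M-a) * M) := Nat.mul_le_mul_left _ h1
      _ = ((M+1)^a * (M-a)) * M := by ring
      _ ≤ M^(a+1) * M := Nat.mul_le_mul_right _ (ih (by omega))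
      _ = M^(a+2) := by ring

lemma wangL1 (a : ℕ) : (a+1)^(2*(a+1)) < a^a * (a+2)^(a+2) := by
  rcases Nat.eq_zero_or_pos a with rfl | ha
  · norm_num
  set M := a^2 + 2*a with hM
  have hMa : a ≤ M := by rw [hM]; nlinarith
  have hMpos : 0 < M := by rw [hM]; nlinarith
  have h1 : (M+1)^a * (M-a) ≤ M^(a+1) := wangBoundM M a hMa
  have hsub : M - a = a^2 + a := by omega
  have h2 : M * (M+1) < (a+2)^2 * (M-a) := by rw [hsub, hM]; nlinarith
  have h3 : (M+1)^(a+1) * (M-a) < (M^a * (a+2)^2) * (M-a) := by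
    calc (M+1)^(a+1) * (M-a) = ((M+1)^a * (M-a)) * (M+1) := by ring
      _ ≤ M^(a+1) * (M+1) := Nat.mul_le_mul_right _ h1
      _ = M^a * (M * (M+1)) := by ring
      _ < M^a * ((a+2)^2 * (M-a)) := mul_lt_mul_of_pos_left h2 (pow_pos hMpos a)
      _ = (M^a * (a+2)^2) * (M-a) := by ring
  have h4 : (M+1)^(a+1) < M^a * (a+2)^2 := Nat.lt_of_mul_lt_mul_right h3
  have e1 : (a+1)^(2*(a+1)) = (M+1)^(a+1) := by
    rw [pow_mul, show (a+1)^2 = M+1 from by rw [hM]; ring]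
  have e2 : a^a * (a+2)^(a+2) = M^a * (a+2)^2 := by
    rw [hM, pow_add, show a^2+2*a = a*(a+2) from by ring, mul_pow]
    ring
  rw [e1, e2]; exact h4

lemma wangL2 (a b : ℕ) (hb : a < b) : (a+1)^(a+1) * b^b < a^a * (b+1)^(b+1) := by
  induction b, hb using Nat.le_induction with
  | base =>
    have := wangL1 a
    rw [two_mul, pow_add] at this
    exact this
  | succ b hb ih =>
    have h2 := wangL1 b
    rw [two_mul, pow_add] at h2
    have key : ((a+1)^(a+1) * (b+1)^(b+1)) * (b^b * (b+1)^(b+1))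
        < (a^a * (b+2)^(b+2)) * (b^b * (b+1)^(b+1)) := by
      calc ((a+1)^(a+1) * (b+1)^(b+1)) * (b^b * (b+1)^(b+1))
          = ((a+1)^(a+1) * b^b) * ((b+1)^(b+1) * (b+1)^(b+1)) := by ring
        _ < (a^a * (b+1)^(b+1)) * (b^b * (b+2)^(b+2)) := by
            exact Nat.mul_lt_mul_of_lt_of_le ih (le_of_lt h2)
              (Nat.mul_pos (pow_pos (by omega) b) (pow_pos (by omega) (b+2)))
        _ = (a^a * (b+2)^(b+2)) * (b^b * (b+1)^(b+1)) := by ring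
    exact Nat.lt_of_mul_lt_mul_right key

lemma wangStep (a p q : ℕ) (hp : a + 2 ≤ p) (hpq : p ≤ q) :
    p^(p-a) * q^(q-a) < (p-1)^(p-1-a) * (q+1)^(q+1-a) := by
  have h1 : (p-1+1)^(p-1+1) * q^q < (p-1)^(p-1) * (q+1)^(q+1) := wangL2 (p-1) q (by omega)
  rw [show p - 1 + 1 = p from by omega] at h1
  have e1 : p^p = p^(p-a) * p^a := by rw [← pow_add]; congr 1; omega
  have e2 : q^q = q^(q-a) * q^a := by rw [← pow_add]; congr 1; omega
  have e3 : (p-1)^(p-1) = (p-1)^(p-1-a) * (p-1)^a := by rw [← pow_add]; congr 1; omega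
  have e4 : (q+1)^(q+1) = (q+1)^(q+1-a) * (q+1)^a := by rw [← pow_add]; congr 1; omega
  have hmul : (p-1)^a * (q+1)^a ≤ p^a * q^a := by
    rw [← mul_pow, ← mul_pow]
    apply Nat.pow_le_pow_left
    obtain ⟨c, rfl⟩ : ∃ c, p = c + 1 := ⟨p - 1, by omega⟩
    simp only [Nat.add_sub_cancel]
    nlinarith
  have key : (p^(p-a) * q^(q-a)) * (p^a * q^a)
      < ((p-1)^(p-1-a) * (q+1)^(q+1-a)) * (p^a * q^a) := by
    calc (p^(p-a) * q^(q-a)) * (p^a * q^a)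
        = (p^(p-a) * p^a) * (q^(q-a) * q^a) := by ring
      _ = p^p * q^q := by rw [← e1, ← e2]
      _ < (p-1)^(p-1) * (q+1)^(q+1) := h1
      _ = ((p-1)^(p-1-a) * (q+1)^(q+1-a)) * ((p-1)^a * (q+1)^a) := by
          rw [e3, e4]; ring
      _ ≤ ((p-1)^(p-1-a) * (q+1)^(q+1-a)) * (p^a * q^a) :=
          Nat.mul_le_mul_left _ hmul
  exact Nat.lt_of_mul_lt_mul_right key

lemma wangNmain (a : ℕ) : ∀ i l, 1 ≤ i → i ≤ l →
    (i+a)^i * (l+a)^l ≤ (1+a) * (i+l+a-1)^(i+l-1) := by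
  intro i
  induction i with
  | zero => omega
  | succ i ih =>
    intro l _ hil
    rcases Nat.eq_zero_or_pos i with rfl | hi
    · rw [show 1+l+a-1 = l+a from by omega, show 1+l-1 = l from by omega, pow_one]
    · have hstep : (i+1+a)^(i+1) * (l+a)^l < (i+a)^i * (l+1+a)^(l+1) := by
        have := wangStep a (i+1+a) (l+a) (by omega) (by omega)
        rw [show i+1+a-a = i+1 from by omega, show l+a-a = l from by omega,
          show i+1+a-1 = i+a from by omega, show i+a-a = i from by omega,
          show l+a+1-a = l+1 from by omega, show l+a+1 = l+1+a from by omega] at this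
        exact this
      have h2 := ih (l+1) hi (by omega)
      rw [show i+(l+1)+a-1 = i+1+l+a-1 from by omega,
        show i+(l+1)-1 = i+1+l-1 from by omega] at h2
      exact le_of_lt (lt_of_lt_of_le hstep h2)

lemma wangSmain (a i l : ℕ) (h2 : 2 ≤ i) (hil : i ≤ l) :
    (i+a)^i * (l+a)^l < (1+a) * (i+l+a-1)^(i+l-1) := by
  obtain ⟨i, rfl⟩ : ∃ i', i = i' + 1 := ⟨i - 1, by omega⟩
  have hstep : (i+1+a)^(i+1) * (l+a)^l < (i+a)^i * (l+1+a)^(l+1) := by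
    have := wangStep a (i+1+a) (l+a) (by omega) (by omega)
    rw [show i+1+a-a = i+1 from by omega, show l+a-a = l from by omega,
      show i+1+a-1 = i+a from by omega, show i+a-a = i from by omega,
      show l+a+1-a = l+1 from by omega, show l+a+1 = l+1+a from by omega] at this
    exact this
  have h2 := wangNmain a i (l+1) (by omega) (by omega)
  rw [show i+(l+1)+a-1 = i+1+l+a-1 from by omega,
    show i+(l+1)-1 = i+1+l-1 from by omega] at h2
  exact lt_of_lt_of_le hstep h2

end ArithAux

section DegAux
variable {W : Type*} [Fintype W] (H : SimpleGraph W) (j l : ℕ)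

lemma wangDegSplit {α β γ : Type*} [Fintype α] [Fintype β] [Fintype γ]
    (G : SimpleGraph (α ⊕ (β ⊕ γ))) [DecidableRel G.Adj] (v : α ⊕ (β ⊕ γ)) :
    G.degree v = (univ.filter (fun a : α => G.Adj v (Sum.inl a))).card
      + ((univ.filter (fun b : β => G.Adj v (Sum.inr (Sum.inl b)))).card
      + (univ.filter (fun c : γ => G.Adj v (Sum.inr (Sum.inr c)))).card) := by
  rw [← SimpleGraph.card_neighborFinset_eq_degree, SimpleGraph.neighborFinset_eq_filter]
  rw [Finset.card_filter, Fintype.sum_sum_type, Fintype.sum_sum_type,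
    ← Finset.card_filter, ← Finset.card_filter, ← Finset.card_filter]

lemma wangDegL (i : Fin j) [DecidableRel (joinCliques H j l).Adj] :
    (joinCliques H j l).degree (Sum.inl i) = (j - 1) + Fintype.card W := by
  classical
  rw [wangDegSplit]
  simp only [joinCliques, SimpleGraph.fromRel_adj]
  simp only [ne_eq, Sum.inl.injEq, Sum.inr.injEq, reduceCtorEq]
  norm_num
  have : Finset.filter (fun a => ¬ i = a) (univ : Finset (Fin j)) = univ.erase i := by
    ext a; simp [eq_comm]
  rw [this, Finset.card_erase_of_mem (Finset.mem_univ i), Finset.card_univ, Fintype.card_fin]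

lemma wangDegW (w : W) [DecidableRel (joinCliques H j l).Adj] :
    (joinCliques H j l).degree (Sum.inr (Sum.inl w))
      = j + ((Finset.univ.filter (fun b => H.Adj w b)).card + l) := by
  classical
  rw [wangDegSplit]
  simp only [joinCliques, SimpleGraph.fromRel_adj]
  simp only [ne_eq, Sum.inl.injEq, Sum.inr.injEq, reduceCtorEq]
  norm_num
  congr 1
  ext b
  simp only [Finset.mem_filter, Finset.mem_univ, true_and]
  constructor
  · rintro ⟨-, h | h⟩
    · exact h
    · exact h.symm
  · exact fun h => ⟨H.ne_of_adj h, Or.inl h⟩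

lemma wangDegR (t : Fin l) [DecidableRel (joinCliques H j l).Adj] :
    (joinCliques H j l).degree (Sum.inr (Sum.inr t)) = Fintype.card W + (l - 1) := by
  classical
  rw [wangDegSplit]
  simp only [joinCliques, SimpleGraph.fromRel_adj]
  simp only [ne_eq, Sum.inl.injEq, Sum.inr.injEq, reduceCtorEq]
  norm_num
  have h3 : Finset.filter (fun c : Fin l => ¬ t = c) univ = univ.erase t := by
    ext a; simp [eq_comm]
  rw [h3, Finset.card_erase_of_mem (Finset.mem_univ t), Finset.card_univ, Fintype.card_fin]

lemma wangZagEq :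
    multZagreb1 (joinCliques H j l)
      = ((j - 1 + Fintype.card W) ^ 2) ^ j
        * ((∏ w : W, ((Finset.univ.filter (fun b => H.Adj w b)).card + (j + l)) ^ 2)
          * ((Fintype.card W + (l - 1)) ^ 2) ^ l) := by
  classical
  rw [multZagreb1]
  rw [Fintype.prod_sum_type, Fintype.prod_sum_type]
  congr 1
  · rw [Finset.prod_congr rfl (fun i _ => by rw [wangDegL]), Finset.prod_const,
      Finset.card_univ, Fintype.card_fin]
  congr 1
  · exact Finset.prod_congr rfl (fun w _ => by
      rw [wangDegW, show j + ((Finset.univ.filter (fun b => H.Adj w b)).card + l)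
        = (Finset.univ.filter (fun b => H.Adj w b)).card + (j + l) from by omega])
  · rw [Finset.prod_congr rfl (fun t _ => by rw [wangDegR]), Finset.prod_const,
      Finset.card_univ, Fintype.card_fin]

end DegAux

/-- **Lemma 3 (Wang).** If `k ≥ 1`, `2 ≤ j` and `2j ≤ n - k`, then
`Π₁(G(j, n-k-j)) < Π₁(G(1, n-k-1))`, where `H` is any graph on `k` vertices. -/
theorem multZagreb1_joinCliques_lt {W : Type*} [Fintype W] (H : SimpleGraph W)
    (n k j : ℕ) (hk : 1 ≤ k) (hW : Fintype.card W = k)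
    (hj : 2 ≤ j) (hjn : 2 * j ≤ n - k) :
    multZagreb1 (joinCliques H j (n - k - j)) <
      multZagreb1 (joinCliques H 1 (n - k - 1)) := by
  classical
  set m := n - k with hm
  have hm4 : 4 ≤ m := by omega
  set l := m - j with hldef
  set l1 := m - 1 with hl1def
  have hjl : j ≤ l := by omega
  have hjlm : j + l = m := by omega
  have h1l1 : 1 + l1 = m := by omega
  rw [wangZagEq, wangZagEq, hjlm, h1l1, hW]
  set P := ∏ w : W, ((Finset.univ.filter (fun b => H.Adj w b)).card + m) ^ 2 with hP
  have hPpos : 0 < P := Finset.prod_pos (fun w _ => pow_pos (by omega) 2)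
  have hkey : (j-1+k)^j * ((k+(l-1))^l) < k^1 * ((k+(l1-1))^l1) := by
    obtain ⟨a, rfl⟩ : ∃ a, k = a + 1 := ⟨k - 1, by omega⟩
    rw [show j-1+(a+1) = j+a from by omega, show (a+1)+(l-1) = l+a from by omega,
      show (a+1)+(l1-1) = l1+a from by omega, pow_one,
      show l1+a = j+l+a-1 from by omega, show l1 = j+l-1 from by omega,
      show a+1 = 1+a from by omega]
    exact wangSmain a j l hj hjl
  have hsq : ((j-1+k)^j * ((k+(l-1))^l))^2 < (k^1 * ((k+(l1-1))^l1))^2 :=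
    Nat.pow_lt_pow_left hkey (by norm_num)
  calc ((j - 1 + k) ^ 2) ^ j * (P * ((k + (l - 1)) ^ 2) ^ l)
      = P * (((j-1+k)^j * ((k+(l-1))^l))^2) := by
        rw [pow_right_comm (j-1+k), pow_right_comm (k+(l-1)), mul_pow]; ring
    _ < P * ((k^1 * ((k+(l1-1))^l1))^2) := mul_lt_mul_of_pos_left hsq hPpos
    _ = ((1 - 1 + k) ^ 2) ^ 1 * (P * ((k + (l1 - 1)) ^ 2) ^ l1) := by
        rw [mul_pow, pow_right_comm (k+(l1-1))]
        norm_num [mul_comm, mul_left_comm, mul_assoc]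
end

section
/- Let n, k, j be natural numbers with k ≥ 1, 2 ≤ j, and 2j ≤ n − k. Then (j+k−1)^{2j} · (n−j−1)^{2(n−k−j)} < (j+k−2)^{2(j−1)} · (n−j)^{2(n−k−j+1)}. -/
/-!
With `s = j + k - 2`, `t = j - 1` and `d = n - k - 2j`, the inequality is the square of
`a 1 * a (d + 1) < a 0 * a (d + 2)` for `a i = (s + i) ^ (t + i)`. This holds because the
sequence `a` is strictly log-convex, `a (i + 1) ^ 2 < a i * a (i + 2)`, which in turn
follows from Bernoulli's inequality for `(1 - 1 / (N + 1)) ^ p` with `N = x (x + 2)`, so that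
`(x + 1) ^ 2 = N + 1`.
-/

section LinearOrderedCommRing

variable {R : Type*} [CommRing R] [LinearOrder R] [IsStrictOrderedRing R]

theorem pow_mul_sub_natCast_le_sub_one_pow_mul {a : R} (ha : 1 ≤ a) (n : ℕ) :
    a ^ n * (a - n) ≤ (a - 1) ^ n * a := by
  cases n with
  | zero => simp
  | succ m =>
    have bernoulli := pow_add_mul_le_add_pow (a := a) (b := -1) (by linarith) (by linarith) (m + 1)
    rw [Nat.add_sub_cancel, ← sub_eq_add_neg] at bernoulli
    calc a ^ (m + 1) * (a - (m + 1 : ℕ)) = (a ^ (m + 1) + (m + 1 : ℕ) * a ^ m * -1) * a := by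
          push_cast; ring
      _ ≤ (a - 1) ^ (m + 1) * a := by gcongr

theorem sq_pow_succ_lt_pow_mul_pow {x : R} (hx : 1 ≤ x) {p : ℕ} (hp : (p : R) ≤ x) :
    ((x + 1) ^ (p + 1)) ^ 2 < x ^ p * (x + 2) ^ (p + 2) := by
  set N := x * (x + 2)
  have hsq : (x + 1) ^ 2 = N + 1 := by ring
  have bernoulli : (N + 1) ^ p * (N + 1 - p) ≤ N ^ p * (N + 1) := by
    simpa using pow_mul_sub_natCast_le_sub_one_pow_mul (a := N + 1) (by nlinarith) p
  have hgap : 0 < N + 1 - p := by nlinarith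
  have hquartic : (N + 1) ^ 2 < (x + 2) ^ 2 * (N + 1 - p) := by nlinarith
  refine lt_of_mul_lt_mul_right ?_ hgap.le
  calc ((x + 1) ^ (p + 1)) ^ 2 * (N + 1 - p) = (N + 1) * ((N + 1) ^ p * (N + 1 - p)) := by
        rw [← pow_mul, mul_comm (p + 1), pow_mul, hsq]; ring
    _ ≤ (N + 1) * (N ^ p * (N + 1)) := by gcongr
    _ = N ^ p * (N + 1) ^ 2 := by ring
    _ < N ^ p * ((x + 2) ^ 2 * (N + 1 - p)) := by gcongr
    _ = x ^ p * (x + 2) ^ (p + 2) * (N + 1 - p) := by rw [mul_pow]; ring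

end LinearOrderedCommRing

theorem mul_succ_lt_mul_succ_of_sq_lt_mul {R : Type*} [CommSemiring R] [LinearOrder R]
    [IsStrictOrderedRing R] {a : ℕ → R} (ha : ∀ i, 0 < a i)
    (hlog : ∀ i, a (i + 1) ^ 2 < a i * a (i + 2)) {i j : ℕ} (hij : i < j) :
    a (i + 1) * a j < a i * a (j + 1) := by
  induction j, hij using Nat.le_induction with
  | base => simpa [sq] using hlog i
  | succ j hij ih =>
    refine lt_of_mul_lt_mul_right ?_ (ha (j + 1)).le
    calc a (i + 1) * a (j + 1) * a (j + 1) = a (i + 1) * a (j + 1) ^ 2 := by ring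
      _ < a (i + 1) * (a j * a (j + 2)) := by gcongr; exacts [ha _, hlog j]
      _ = a (i + 1) * a j * a (j + 2) := by ring
      _ < a i * a (j + 1) * a (j + 2) := by gcongr; exact ha _
      _ = a i * a (j + 1 + 1) * a (j + 1) := by ring

/-- The key numerical inequality in Lemma 3 (Wang): if `k ≥ 1`, `2 ≤ j` and
`2j ≤ n - k`, then
`(j+k-1)^(2j) * (n-j-1)^(2(n-k-j)) < (j+k-2)^(2(j-1)) * (n-j)^(2(n-k-j+1))`. -/
theorem zagreb_key_nat_ineq (n k j : ℕ) (hk : 1 ≤ k) (hj : 2 ≤ j)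
    (hjn : 2 * j ≤ n - k) :
    (j + k - 1) ^ (2 * j) * (n - j - 1) ^ (2 * (n - k - j)) <
      (j + k - 2) ^ (2 * (j - 1)) * (n - j) ^ (2 * (n - k - j + 1)) := by
  obtain ⟨s, t, d, hs, ht, hd, hst⟩ : ∃ s t d,
      j + k - 2 = s ∧ j - 1 = t ∧ n - k - 2 * j = d ∧ 1 ≤ t ∧ t ≤ s :=
    ⟨_, _, _, rfl, rfl, rfl, by omega⟩
  have key : (s + 1) ^ (t + 1) * (s + (d + 1)) ^ (t + (d + 1)) <
      (s + 0) ^ (t + 0) * (s + (d + 2)) ^ (t + (d + 2)) := by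
    refine mul_succ_lt_mul_succ_of_sq_lt_mul (a := fun i ↦ (s + i) ^ (t + i))
      (fun _ ↦ pow_pos (by omega) _) (fun i ↦ ?_) d.succ_pos
    exact_mod_cast sq_pow_succ_lt_pow_mul_pow (x := ((s + i : ℕ) : ℤ)) (p := t + i)
      (by norm_cast; omega) (by norm_cast; omega)
  rw [show j + k - 1 = s + 1 by omega, show n - j - 1 = s + (d + 1) by omega,
    show n - j = s + (d + 2) by omega, show 2 * j = 2 * (t + 1) by omega, hs, ht,
    show n - k - j = t + (d + 1) by omega, show t + (d + 1) + 1 = t + (d + 2) by omega]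
  simpa only [pow_mul', ← mul_pow, add_zero] using Nat.pow_lt_pow_left key two_ne_zero
end

section
/- Let G be a connected finite simple graph, let u and v be distinct non-adjacent vertices of G with d(u) ≥ d(v), and let v₁, v₂, …, v_s be s distinct vertices that are neighbors of v but not neighbors of u, where 1 ≤ s ≤ d(v). Let G' = G − {vv₁, vv₂, …, vv_s} + {uv₁, uv₂, …, uv_s} be the graph obtained from G by deleting the edges vv₁, …, vv_s and adding the edges uv₁, …, uv_s. Then Π₂(G') > Π₂(G). -/
/-- The second multiplicative Zagreb index `Π₂(G) = ∏_{u ∈ V(G)} d(u)^{d(u)}`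
(with the natural-number convention `0^0 = 1`). -/
noncomputable def multZagreb2 {V : Type*} [Fintype V] (G : SimpleGraph V) : ℕ :=
  letI := Classical.decRel G.Adj
  ∏ v : V, (G.degree v) ^ (G.degree v)

open Finset Real

/-!
Moving the edges raises `d(u)` by `t`, lowers `d(v)` by `t`, and leaves every other degree
unchanged, since each `vᵢ` trades its neighbour `v` for `u`. So `Π₂` changes only in the factor
`d(u)^d(u) · d(v)^d(v) = exp (φ d(u) + φ d(v))` with `φ x = x log x`, and pushing the pair
`d(v) ≤ d(u)` apart to `(d(v) - t, d(u) + t)` strictly increases `φ d(u) + φ d(v)` because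
`φ` is strictly convex.
-/

theorem StrictConvexOn.add_lt_add_sub_add {s : Set ℝ} {f : ℝ → ℝ}
    (hf : StrictConvexOn ℝ s f) {x y t : ℝ} (hx : x - t ∈ s) (hy : y + t ∈ s) (hxy : x ≤ y)
    (ht : 0 < t) :
    f x + f y < f (x - t) + f (y + t) := by
  have hslope : (f x - f (x - t)) / t < (f (y + t) - f y) / t := by
    rcases hxy.eq_or_lt with rfl | hxy
    · simpa using hf.slope_strict_mono_adjacent hx hy (y := x) (by linarith) (by linarith)
    have hxs : x ∈ s := hf.1.ordConnected.out hx hy ⟨by linarith, by linarith⟩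
    have hys : y ∈ s := hf.1.ordConnected.out hx hy ⟨by linarith, by linarith⟩
    calc (f x - f (x - t)) / t < (f y - f x) / (y - x) := by
          simpa using hf.slope_strict_mono_adjacent hx hys (by linarith) hxy
      _ < (f (y + t) - f y) / t := by
          simpa using hf.slope_strict_mono_adjacent hxs hy hxy (by linarith)
  have := (div_lt_div_iff_of_pos_right ht).1 hslope
  linarith

theorem Nat.cast_pow_self (n : ℕ) : ((n ^ n : ℕ) : ℝ) = exp (n * Real.log n) := by
  rcases n.eq_zero_or_pos with rfl | hn
  · simp -- `0 ^ 0 = 1 = exp (0 * log 0)`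
  rw [Nat.cast_pow, ← rpow_natCast, rpow_def_of_pos (by positivity), mul_comm]

theorem Nat.pow_self_mul_pow_self_lt {a b t : ℕ} (hba : b ≤ a) (ht : 0 < t) (htb : t ≤ b) :
    a ^ a * b ^ b < (a + t) ^ (a + t) * (b - t) ^ (b - t) := by
  have key := strictConvexOn_mul_log.add_lt_add_sub_add (x := b) (y := a) (t := t)
    (by simpa using htb) (by rw [Set.mem_Ici]; positivity) (by exact_mod_cast hba)
    (by exact_mod_cast ht)
  rw [← Nat.cast_lt (α := ℝ)]
  push_cast only [Nat.cast_mul, Nat.cast_pow_self]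
  rw [← exp_add, ← exp_add, exp_lt_exp]
  push_cast [Nat.cast_sub htb]
  linarith

theorem Fintype.prod_lt_prod_of_eq_off_pair {ι M : Type*} [Fintype ι] [DecidableEq ι]
    [CommSemiring M] [PartialOrder M] [IsStrictOrderedRing M] {g h : ι → M} {i j : ι}
    (hij : i ≠ j) (hg : ∀ k, 0 < g k) (hh : ∀ k, k ≠ i → k ≠ j → h k = g k)
    (hlt : g i * g j < h i * h j) : ∏ k, g k < ∏ k, h k := by
  have hrest : ∏ k ∈ {i, j}ᶜ, h k = ∏ k ∈ {i, j}ᶜ, g k :=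
    Finset.prod_congr rfl fun k hk ↦ by
      simp only [mem_compl, mem_insert, mem_singleton, not_or] at hk
      exact hh k hk.1 hk.2
  rw [← prod_mul_prod_compl {i, j} g, ← prod_mul_prod_compl {i, j} h, hrest, prod_pair hij,
    prod_pair hij]
  exact mul_lt_mul_of_pos_right hlt (prod_pos fun k _ ↦ hg k)

namespace SimpleGraph
variable {V : Type*} (G : SimpleGraph V)

def moveEdges (u v : V) (R : Set V) : SimpleGraph V :=
  G.deleteEdges ((s(v, ·)) '' R) ⊔ fromEdgeSet ((s(u, ·)) '' R)

variable {G} {u v : V}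

lemma moveEdges_adj {R : Set V} {x y : V} :
    (G.moveEdges u v R).Adj x y ↔
      G.Adj x y ∧ ¬ (x = v ∧ y ∈ R ∨ y = v ∧ x ∈ R) ∨
        (x = u ∧ y ∈ R ∨ y = u ∧ x ∈ R) ∧ x ≠ y := by
  simp only [moveEdges, sup_adj, deleteEdges_adj, fromEdgeSet_adj, Set.mem_image, Sym2.eq_iff]
  grind

variable [Fintype V] [DecidableEq V] [DecidableRel G.Adj] {R : Finset V}
  [DecidableRel (G.moveEdges u v R).Adj]

lemma degree_moveEdges_source (huv : u ≠ v) (hRv : R ⊆ G.neighborFinset v) :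
    (G.moveEdges u v R).degree v = G.degree v - #R := by
  have : (G.moveEdges u v R).neighborFinset v = G.neighborFinset v \ R := by
    ext y
    have : v ∉ R := fun h ↦ by simpa using hRv h
    simp only [mem_neighborFinset, moveEdges_adj, mem_sdiff, mem_coe]
    grind
  rw [← card_neighborFinset_eq_degree, this, card_sdiff_of_subset hRv,
    card_neighborFinset_eq_degree]

lemma degree_moveEdges_target (hu : u ∉ R) (hRu : Disjoint (G.neighborFinset u) R) :
    (G.moveEdges u v R).degree u = G.degree u + #R := by
  have : (G.moveEdges u v R).neighborFinset u = G.neighborFinset u ∪ R := by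
    ext y
    have : ∀ y ∈ R, ¬G.Adj u y := fun y hy h ↦
      Finset.disjoint_left.1 hRu (by simpa using h) hy
    simp only [mem_neighborFinset, moveEdges_adj, mem_union, mem_coe]
    grind
  rw [← card_neighborFinset_eq_degree, this, card_union_of_disjoint hRu,
    card_neighborFinset_eq_degree]

lemma degree_moveEdges_of_ne (hRv : R ⊆ G.neighborFinset v)
    (hRu : Disjoint (G.neighborFinset u) R) {w : V} (hwu : w ≠ u) (hwv : w ≠ v) :
    (G.moveEdges u v R).degree w = G.degree w := by
  by_cases hw : w ∈ R
  · have : (G.moveEdges u v R).neighborFinset w = insert u ((G.neighborFinset w).erase v) := by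
      ext y
      simp only [mem_neighborFinset, moveEdges_adj, mem_insert, mem_erase, mem_coe]
      grind
    have hv : v ∈ G.neighborFinset w := by simpa [adj_comm] using hRv hw
    have hu : u ∉ G.neighborFinset w := fun h ↦
      Finset.disjoint_right.1 hRu hw (by simpa [adj_comm] using h)
    rw [← card_neighborFinset_eq_degree, this, card_insert_of_notMem (by simp [hu]),
      card_erase_add_one hv, card_neighborFinset_eq_degree]
  · have : (G.moveEdges u v R).neighborFinset w = G.neighborFinset w := by
      ext y
      simp only [mem_neighborFinset, moveEdges_adj, mem_coe]
      grind
    rw [← card_neighborFinset_eq_degree, this, card_neighborFinset_eq_degree]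

end SimpleGraph

lemma multZagreb2_eq_prod {V : Type*} [Fintype V] (G : SimpleGraph V) [DecidableRel G.Adj] :
    multZagreb2 G = ∏ w, G.degree w ^ G.degree w := by
  unfold multZagreb2
  congr!

theorem multZagreb2_moveEdges_gt_general {V : Type*} [Fintype V] (G : SimpleGraph V)
    [DecidableRel G.Adj]
    (u v : V) (huv : u ≠ v) (hadj : ¬ G.Adj u v)
    (hdeg : G.degree v ≤ G.degree u)
    (t : ℕ) (ht : 1 ≤ t) (htd : t ≤ G.degree v)
    (f : Fin t → V) (hf : Function.Injective f)
    (hfv : ∀ i, G.Adj v (f i)) (hfu : ∀ i, ¬ G.Adj u (f i)) :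
    multZagreb2 G <
      multZagreb2 ((G.deleteEdges (Set.range fun i => s(v, f i))) ⊔
        SimpleGraph.fromEdgeSet (Set.range fun i => s(u, f i))) := by
  classical
  set R := univ.image f
  have hG' : (G.deleteEdges (Set.range fun i => s(v, f i))) ⊔
      SimpleGraph.fromEdgeSet (Set.range fun i => s(u, f i)) = G.moveEdges u v R := by
    rw [SimpleGraph.moveEdges, coe_image, coe_univ, Set.image_univ, ← Set.range_comp,
      ← Set.range_comp]
    rfl
  have hR : #R = t := by rw [card_image_of_injective _ hf, card_univ, Fintype.card_fin]
  have hRv : R ⊆ G.neighborFinset v := by simpa [R, subset_iff] using hfv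
  have hRu : Disjoint (G.neighborFinset u) R := by simpa [R, disjoint_right] using hfu
  have hu : u ∉ R := by simpa [R] using fun i h ↦ hadj (h ▸ hfv i).symm
  rw [hG', multZagreb2_eq_prod, multZagreb2_eq_prod]
  refine Fintype.prod_lt_prod_of_eq_off_pair huv (fun _ ↦ Nat.pow_self_pos)
    (fun w hwu hwv ↦ by rw [SimpleGraph.degree_moveEdges_of_ne hRv hRu hwu hwv]) ?_
  rw [SimpleGraph.degree_moveEdges_target hu hRu, SimpleGraph.degree_moveEdges_source huv hRv, hR]
  exact Nat.pow_self_mul_pow_self_lt hdeg ht (hR ▸ htd)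

/-- **Lemma 4 (Wang).** Let `G` be a connected graph, `u ≠ v` non-adjacent
vertices with `d(u) ≥ d(v)`, and let `v₁, …, v_t` (given by an injective
`f : Fin t → V`) be distinct neighbors of `v` that are not neighbors of `u`,
`1 ≤ t ≤ d(v)`.  Moving these edges from `v` to `u`, i.e. forming
`G' = G - {vv₁, …, vv_t} + {uv₁, …, uv_t}`, strictly increases `Π₂`. -/
theorem multZagreb2_moveEdges_gt {V : Type*} [Fintype V] (G : SimpleGraph V)
    [DecidableRel G.Adj] (hG : G.Connected)
    (u v : V) (huv : u ≠ v) (hadj : ¬ G.Adj u v)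
    (hdeg : G.degree v ≤ G.degree u)
    (t : ℕ) (ht : 1 ≤ t) (htd : t ≤ G.degree v)
    (f : Fin t → V) (hf : Function.Injective f)
    (hfv : ∀ i, G.Adj v (f i)) (hfu : ∀ i, ¬ G.Adj u (f i)) :
    multZagreb2 G <
      multZagreb2 ((G.deleteEdges (Set.range fun i => s(v, f i))) ⊔
        SimpleGraph.fromEdgeSet (Set.range fun i => s(u, f i))) :=
  multZagreb2_moveEdges_gt_general G u v huv hadj hdeg t ht htd f hf hfv hfu
end

section
/- Let n, k, j be natural numbers with k ≥ 1, 2 ≤ j, and 2j ≤ n − k, and let H be any finite simple graph on k vertices. Then Π₂(G(j, n−k−j)) < Π₂(G(1, n−k−1)), where both graphs are built from the same graph H. -/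
/-!
In `G(j, l)` the vertices of `K_j` have degree `j - 1 + k`, those of `K_l` degree `l - 1 + k`,
and a vertex `w` of `H` has degree `d_H(w) + j + l`. For `j + l = n - k` fixed, the factor of
`Π₂` coming from `H` is therefore the same for all `j`, and the logarithm of the remaining
factor is `φ(j) + φ(n - k - j)` with `φ(x) = x (x + k - 1) log (x + k - 1)`. Since `φ` is
strictly convex on `[1, ∞)`, this sum is strictly largest at the extreme split `j = 1`.
-/

open Real Set

noncomputable def cliqueLog (K x : ℝ) : ℝ := x * (x + K) * log (x + K)

lemma hasDerivAt_cliqueLog (K x : ℝ) (hx : 0 < x + K) :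
    HasDerivAt (cliqueLog K) ((2 * x + K) * log (x + K) + x) x := by
  have hpoly : HasDerivAt (fun x => x * (x + K)) (1 * (x + K) + x * 1) x :=
    (hasDerivAt_id x).mul ((hasDerivAt_id x).add_const K)
  have hlog : HasDerivAt (fun x => log (x + K)) ((x + K)⁻¹) x := by
    simpa using ((hasDerivAt_id x).add_const K).log hx.ne'
  refine (hpoly.mul hlog).congr_deriv ?_
  field_simp
  ring

lemma strictConvexOn_cliqueLog {K : ℝ} (hK : 0 ≤ K) :
    StrictConvexOn ℝ (Ici 1) (cliqueLog K) := by
  apply StrictMonoOn.strictConvexOn_of_deriv (convex_Ici 1)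
  · exact fun x (hx : 1 ≤ x) =>
      (hasDerivAt_cliqueLog K x (by linarith)).continuousAt.continuousWithinAt
  · rw [interior_Ici]
    intro x (hx : 1 < x) y (hy : 1 < y) hxy
    rw [(hasDerivAt_cliqueLog K x (by linarith)).deriv,
      (hasDerivAt_cliqueLog K y (by linarith)).deriv]
    have hlog_pos : 0 < log (x + K) := log_pos (by linarith)
    have hlog_le : log (x + K) ≤ log (y + K) := log_le_log (by linarith) (by linarith)
    nlinarith

lemma StrictConvexOn.add_lt_add_of_add_eq {s : Set ℝ} {f : ℝ → ℝ}
    (hf : StrictConvexOn ℝ s f) {a b x y : ℝ} (ha : a ∈ s) (hb : b ∈ s) (hax : a < x)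
    (hxb : x < b) (hxy : x + y = a + b) :
    f x + f y < f a + f b := by
  have hab : 0 < b - a := by linarith
  set α := (b - x) / (b - a) with hα_def
  set β := (x - a) / (b - a) with hβ_def
  have hα : 0 < α := div_pos (by linarith) hab
  have hβ : 0 < β := div_pos (by linarith) hab
  have hsum : α + β = 1 := by rw [hα_def, hβ_def]; field_simp; ring
  have ex : α * a + β * b = x := by rw [hα_def, hβ_def]; field_simp; ring
  have ey : β * a + α * b = y := by
    rw [hα_def, hβ_def]; field_simp; linear_combination (a - b) * hxy
  have hx := hf.2 ha hb (by linarith) hα hβ hsum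
  have hy := hf.2 ha hb (by linarith) hβ hα (by linarith)
  simp only [smul_eq_mul, ex, ey] at hx hy
  linear_combination hx + hy + f a * hsum + f b * hsum

/-- The contribution to `Π₂` of a clique of `x` vertices, each of degree `x - 1 + k`. -/
def cliqueFactor (k x : ℕ) : ℕ := ((x - 1 + k) ^ (x - 1 + k)) ^ x

lemma cliqueFactor_pos {k : ℕ} (hk : 1 ≤ k) (x : ℕ) : 0 < cliqueFactor k x := by
  unfold cliqueFactor
  have : 0 < x - 1 + k := by omega
  positivity

lemma log_cliqueFactor (k : ℕ) {x : ℕ} (hx : 1 ≤ x) :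
    log (cliqueFactor k x) = cliqueLog (k - 1) x := by
  rw [cliqueFactor, cliqueLog, Nat.cast_pow, Nat.cast_pow, log_pow, log_pow,
    Nat.cast_add, Nat.cast_sub hx, Nat.cast_one, sub_add_comm, add_comm _ (x : ℝ), mul_assoc]

lemma cliqueFactor_mul_lt {k j m : ℕ} (hk : 1 ≤ k) (hj : 2 ≤ j) (hjm : 2 * j ≤ m) :
    cliqueFactor k j * cliqueFactor k (m - j) < cliqueFactor k 1 * cliqueFactor k (m - 1) := by
  have hpos (x : ℕ) : (0 : ℝ) < cliqueFactor k x := by exact_mod_cast cliqueFactor_pos hk x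
  rw [← Nat.cast_lt (α := ℝ), Nat.cast_mul, Nat.cast_mul,
    ← log_lt_log_iff (mul_pos (hpos _) (hpos _)) (mul_pos (hpos _) (hpos _)),
    log_mul (hpos _).ne' (hpos _).ne', log_mul (hpos _).ne' (hpos _).ne',
    log_cliqueFactor k (by omega), log_cliqueFactor k (by omega),
    log_cliqueFactor k le_rfl, log_cliqueFactor k (by omega),
    Nat.cast_sub (by omega : j ≤ m), Nat.cast_sub (by omega : 1 ≤ m)]
  have hk' : (1 : ℝ) ≤ k := by exact_mod_cast hk
  have hj' : (2 : ℝ) ≤ j := by exact_mod_cast hj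
  have hjm' : 2 * (j : ℝ) ≤ m := by exact_mod_cast hjm
  refine (strictConvexOn_cliqueLog (by linarith)).add_lt_add_of_add_eq
    (mem_Ici.2 (by simp)) (mem_Ici.2 ?_) ?_ ?_ ?_ <;> push_cast <;> linarith

section Degrees

variable {W : Type*} [Fintype W] (H : SimpleGraph W) (j l : ℕ)

lemma degree_joinCliques_inl (i : Fin j)
    [Fintype ((joinCliques H j l).neighborSet (Sum.inl i))] :
    (joinCliques H j l).degree (Sum.inl i) = j - 1 + Fintype.card W := by
  classical
  rw [← SimpleGraph.card_neighborSet_eq_degree, Fintype.card_subtype, Finset.card_filter,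
    Fintype.sum_sum_type, Fintype.sum_sum_type]
  simp [joinCliques, Finset.sum_ite, Finset.filter_ne]

lemma degree_joinCliques_inr_inl (w : W) [Fintype (H.neighborSet w)]
    [Fintype ((joinCliques H j l).neighborSet (Sum.inr (Sum.inl w)))] :
    (joinCliques H j l).degree (Sum.inr (Sum.inl w)) = H.degree w + (j + l) := by
  classical
  rw [← SimpleGraph.card_neighborSet_eq_degree, ← SimpleGraph.card_neighborSet_eq_degree,
    Fintype.card_subtype, Fintype.card_subtype, Finset.card_filter, Fintype.sum_sum_type,
    Fintype.sum_sum_type]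
  simp [joinCliques, H.adj_comm _ w, and_iff_right_of_imp (fun h : H.Adj w _ => h.ne)]
  ring

lemma degree_joinCliques_inr_inr (i : Fin l)
    [Fintype ((joinCliques H j l).neighborSet (Sum.inr (Sum.inr i)))] :
    (joinCliques H j l).degree (Sum.inr (Sum.inr i)) = l - 1 + Fintype.card W := by
  classical
  rw [← SimpleGraph.card_neighborSet_eq_degree, Fintype.card_subtype, Finset.card_filter,
    Fintype.sum_sum_type, Fintype.sum_sum_type]
  simp [joinCliques, Finset.sum_ite, Finset.filter_ne]
  ring

lemma multZagreb2_joinCliques [DecidableRel H.Adj] :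
    multZagreb2 (joinCliques H j l) = cliqueFactor (Fintype.card W) j *
      (∏ w : W, (H.degree w + (j + l)) ^ (H.degree w + (j + l))) *
        cliqueFactor (Fintype.card W) l := by
  classical
  simp only [multZagreb2, Fintype.prod_sum_type, degree_joinCliques_inl,
    degree_joinCliques_inr_inl, degree_joinCliques_inr_inr, Finset.prod_const,
    Finset.card_univ, Fintype.card_fin, cliqueFactor, mul_assoc]

end Degrees

/-- **Lemma 5 (Wang).** If `k ≥ 1`, `2 ≤ j` and `2j ≤ n - k`, then
`Π₂(G(j, n-k-j)) < Π₂(G(1, n-k-1))`, where `H` is any graph on `k` vertices. -/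
theorem multZagreb2_joinCliques_lt {W : Type*} [Fintype W] (H : SimpleGraph W)
    (n k j : ℕ) (hk : 1 ≤ k) (hW : Fintype.card W = k)
    (hj : 2 ≤ j) (hjn : 2 * j ≤ n - k) :
    multZagreb2 (joinCliques H j (n - k - j)) <
      multZagreb2 (joinCliques H 1 (n - k - 1)) := by
  classical
  rw [multZagreb2_joinCliques, multZagreb2_joinCliques, hW,
    show j + (n - k - j) = n - k by omega, show 1 + (n - k - 1) = n - k by omega]
  have hH : 0 < ∏ w : W, (H.degree w + (n - k)) ^ (H.degree w + (n - k)) :=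
    Finset.prod_pos fun w _ => pow_pos (by omega) _
  rw [mul_right_comm, mul_right_comm (cliqueFactor k 1)]
  exact Nat.mul_lt_mul_of_pos_right (cliqueFactor_mul_lt hk hj hjn) hH
end

section
/- Let n, k be natural numbers with 1 ≤ k ≤ n − 2, and let G be a connected finite simple graph on n vertices that has a vertex cut of size at most k (i.e., there is a set S of at most k vertices such that the subgraph of G induced on the complement of S is disconnected). Then Π₁(G) ≤ k² · (n−1)^{2k} · (n−2)^{2(n−k−1)}, and equality holds if and only if G is isomorphic to K_n^k. -/
/-- The graph `K_n^k`: the complete graph `K_{n-1}` (on the vertices `some a`)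
together with one extra vertex (`none`) joined to exactly `k` vertices of
`K_{n-1}`. -/
def Knk (n k : ℕ) : SimpleGraph (Option (Fin (n - 1))) :=
  SimpleGraph.fromRel (fun x y =>
    match x, y with
    | some _, some _ => True
    | none, some a => (a : ℕ) < k
    | some a, none => (a : ℕ) < k
    | none, none => False)

/-!
Let `S` be a cut with `|S| ≤ k`. The vertices of `G - S` split into two nonempty sides `A`, `B`
with no edge between them; moving vertices of `A ∪ B` into the cut we may assume that the cut has
exactly `k` vertices, so `|A| + |B| + k = n`. Then `G` is a spanning subgraph of
`K_k ∨ (K_|A| ∪ K_|B|)`, and `Π₁` strictly increases when edges are added to a graph without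
isolated vertices. The index of that join is `((a+k-1)^a (b+k-1)^b (n-1)^k)²` with `a = |A|`,
`b = |B|`; as `t ↦ (t+k-1)^t` is strictly log-convex, `(a+k-1)^a (b+k-1)^b ≤ k (n-2)^(n-k-1)`, with
equality only if `a = 1` or `b = 1`, and `K_k ∨ (K_1 ∪ K_{n-k-1})` is `K_n^k`.
-/

open Finset

def StrictLogConvexSeq (g : ℕ → ℕ) : Prop := ∀ n, g (n + 1) ^ 2 < g n * g (n + 2)

namespace StrictLogConvexSeq

variable {g : ℕ → ℕ}

theorem succ_mul_lt_mul_succ (hg : StrictLogConvexSeq g) {i j : ℕ} (hij : i < j) :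
    g (i + 1) * g j < g i * g (j + 1) := by
  induction j, hij using Nat.le_induction with
  | base => simpa [sq] using hg i
  | succ j _ ih =>
    refine lt_of_mul_lt_mul_right (a := g j * g (j + 1)) ?_ (Nat.zero_le _)
    calc g (i + 1) * g (j + 1) * (g j * g (j + 1)) = g (i + 1) * g j * g (j + 1) ^ 2 := by ring
      _ < g i * g (j + 1) * (g j * g (j + 2)) := Nat.mul_lt_mul'' ih (hg j)
      _ = g i * g (j + 1 + 1) * (g j * g (j + 1)) := by ring

theorem mul_le_mul_add_of_le (hg : StrictLogConvexSeq g) {a b : ℕ} (hab : a ≤ b) :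
    g (a + 1) * g (b + 1) ≤ g 1 * g (a + b + 1) := by
  induction a generalizing b with
  | zero => simp
  | succ a ih =>
    calc g (a + 2) * g (b + 1) ≤ g (a + 1) * g (b + 2) := (hg.succ_mul_lt_mul_succ (by omega)).le
      _ ≤ g 1 * g (a + (b + 1) + 1) := ih (by omega)
      _ = g 1 * g (a + 1 + b + 1) := by ring_nf

theorem mul_le_mul_add (hg : StrictLogConvexSeq g) (a b : ℕ) :
    g (a + 1) * g (b + 1) ≤ g 1 * g (a + b + 1) := by
  rcases le_total a b with hab | hba
  · exact hg.mul_le_mul_add_of_le hab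
  · rw [mul_comm, add_comm a b]
    exact hg.mul_le_mul_add_of_le hba

theorem mul_lt_mul_add (hg : StrictLogConvexSeq g) {a b : ℕ} (ha : 1 ≤ a) (hb : 1 ≤ b) :
    g (a + 1) * g (b + 1) < g 1 * g (a + b + 1) := by
  wlog hab : a ≤ b generalizing a b
  · rw [mul_comm, add_comm a b]
    exact this hb ha (by omega)
  obtain ⟨a, rfl⟩ := Nat.exists_eq_add_of_le' ha
  calc g (a + 1 + 1) * g (b + 1) < g (a + 1) * g (b + 2) := hg.succ_mul_lt_mul_succ (by omega)
    _ ≤ g 1 * g (a + (b + 1) + 1) := hg.mul_le_mul_add a (b + 1)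
    _ = g 1 * g (a + 1 + b + 1) := by ring_nf

end StrictLogConvexSeq

/-- Bernoulli's inequality `(1 - 1/x)^t ≥ 1 - t/x`, multiplied by `x^(t+1)`. -/
theorem sub_mul_pow_le_mul_sub_one_pow {R : Type*} [CommRing R] [LinearOrder R]
    [IsStrictOrderedRing R] {x : R} (hx : 1 ≤ x) (t : ℕ) : (x - t) * x ^ t ≤ x * (x - 1) ^ t := by
  induction t with
  | zero => simp
  | succ t ih =>
    have ht : 0 ≤ (t : R) * x ^ t := by positivity
    calc (x - (t + 1 : ℕ)) * x ^ (t + 1) = (x - 1) * ((x - t) * x ^ t) - t * x ^ t := by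
          push_cast; ring
      _ ≤ (x - 1) * (x * (x - 1) ^ t) := by
          nlinarith [mul_le_mul_of_nonneg_left ih (sub_nonneg.2 hx)]
      _ = x * (x - 1) ^ (t + 1) := by ring

theorem strictLogConvexSeq_add_pow (m : ℕ) : StrictLogConvexSeq fun t => (t + m) ^ t := by
  intro t
  dsimp only
  zify
  obtain ⟨z, hz⟩ : ∃ z : ℤ, z = t + 1 + m := ⟨_, rfl⟩
  rw [show (t : ℤ) + m = z - 1 by omega, show (t : ℤ) + 2 + m = z + 1 by omega, ← hz]
  -- the right side is `(z+1)^2 (z^2-1)^t`, which Bernoulli's inequality compares with `z^(2t)`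
  have hzt : (t : ℤ) + 1 ≤ z := by omega
  have hP : 0 < (z ^ 2) ^ t := pow_pos (by nlinarith) t
  have hbern := mul_le_mul_of_nonneg_left
    (sub_mul_pow_le_mul_sub_one_pow (x := z ^ 2) (by nlinarith) t) (sq_nonneg (z + 1))
  have key : z ^ 2 * z ^ 2 < (z + 1) ^ 2 * (z ^ 2 - t) := by nlinarith
  have := mul_lt_mul_of_pos_right key hP
  calc (z ^ (t + 1)) ^ 2 = z ^ 2 * (z ^ 2) ^ t := by ring
    _ < (z + 1) ^ 2 * (z ^ 2 - 1) ^ t :=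
      lt_of_mul_lt_mul_left (a := z ^ 2) (by nlinarith) (sq_nonneg z)
    _ = (z - 1) ^ t * (z + 1) ^ (t + 2) := by
      rw [show z ^ 2 - 1 = (z - 1) * (z + 1) by ring, mul_pow]; ring

theorem add_pow_mul_add_pow_le {a b k : ℕ} (ha : 1 ≤ a) (hb : 1 ≤ b) (hk : 1 ≤ k) :
    (a + k - 1) ^ a * (b + k - 1) ^ b ≤ k * (a + b + k - 2) ^ (a + b - 1) := by
  obtain ⟨a, rfl⟩ := Nat.exists_eq_add_of_le' ha
  obtain ⟨b, rfl⟩ := Nat.exists_eq_add_of_le' hb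
  obtain ⟨m, rfl⟩ := Nat.exists_eq_add_of_le' hk
  convert (strictLogConvexSeq_add_pow m).mul_le_mul_add a b <;>
    (try rw [pow_one]) <;> omega

theorem add_pow_mul_add_pow_lt {a b k : ℕ} (ha : 2 ≤ a) (hb : 2 ≤ b) (hk : 1 ≤ k) :
    (a + k - 1) ^ a * (b + k - 1) ^ b < k * (a + b + k - 2) ^ (a + b - 1) := by
  obtain ⟨a, rfl⟩ := Nat.exists_eq_add_of_le' (show 1 ≤ a by omega)
  obtain ⟨b, rfl⟩ := Nat.exists_eq_add_of_le' (show 1 ≤ b by omega)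
  obtain ⟨m, rfl⟩ := Nat.exists_eq_add_of_le' hk
  convert (strictLogConvexSeq_add_pow m).mul_lt_mul_add (a := a) (b := b) (by omega) (by omega) <;>
    (try rw [pow_one]) <;> omega

theorem exists_equiv_apply_mem_iff {α β : Type*} [Fintype α] [Fintype β] [DecidableEq α]
    [DecidableEq β] {s : Finset α} {t : Finset β} (h : Fintype.card α = Fintype.card β)
    (hst : #s = #t) : ∃ e : α ≃ β, ∀ x, e x ∈ t ↔ x ∈ s := by
  have e₁ : s ≃ t := Fintype.equivOfCardEq (by simpa using hst)
  have e₂ : {x // x ∉ s} ≃ {y // y ∉ t} :=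
    Fintype.equivOfCardEq (by simp [Fintype.card_subtype_compl, h, hst])
  refine ⟨(Equiv.sumCompl (· ∈ s)).symm.trans ((e₁.sumCongr e₂).trans (Equiv.sumCompl (· ∈ t))),
    fun x => ?_⟩
  by_cases hx : x ∈ s
  · simp [Equiv.sumCompl_symm_apply_of_pos hx, hx]
  · simpa [Equiv.sumCompl_symm_apply_of_neg hx, hx] using (e₂ ⟨x, hx⟩).2

theorem exists_equiv_apply_eq_and_apply_mem_iff {α β : Type*} [Fintype α] [Fintype β]
    [DecidableEq α] [DecidableEq β] {s : Finset α} {t : Finset β} {u : α} {u' : β}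
    (h : Fintype.card α = Fintype.card β) (hst : #s = #t) (hu : u ∉ s) (hu' : u' ∉ t) :
    ∃ e : α ≃ β, e u = u' ∧ ∀ x, e x ∈ t ↔ x ∈ s := by
  obtain ⟨e, he⟩ := exists_equiv_apply_mem_iff h hst
  have hswap : ∀ y, Equiv.swap (e u) u' y ∈ t ↔ y ∈ t := by
    intro y
    rcases eq_or_ne y (e u) with rfl | h₁
    · simp [(he u).not.2 hu, hu']
    rcases eq_or_ne y u' with rfl | h₂
    · simp [(he u).not.2 hu, hu']
    · rw [Equiv.swap_apply_of_ne_of_ne h₁ h₂]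
  exact ⟨e.trans (Equiv.swap (e u) u'), by simp, fun x => by simp [hswap, he]⟩

theorem card_filter_le_val (N k : ℕ) : #{a : Fin N | k ≤ (a : ℕ)} = N - k := by
  have := card_filter_add_card_filter_not (s := (univ : Finset (Fin N))) (fun a => (a : ℕ) < k)
  simp only [not_lt, Fin.card_filter_val_lt, card_univ, Fintype.card_fin] at this
  omega

theorem exists_subset_subset_card_add_eq {α : Type*} {A B : Finset α} (hA : A.Nonempty)
    (hB : B.Nonempty) {c : ℕ} (hc : 2 ≤ c) (hcAB : c ≤ #A + #B) :
    ∃ A' ⊆ A, ∃ B' ⊆ B, A'.Nonempty ∧ B'.Nonempty ∧ #A' + #B' = c := by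
  have := hA.card_pos
  have := hB.card_pos
  obtain ⟨A', hA', hA'c⟩ := exists_subset_card_eq (min_le_left #A (c - 1))
  obtain ⟨B', hB', hB'c⟩ := exists_subset_card_eq (show c - min #A (c - 1) ≤ #B by omega)
  refine ⟨A', hA', B', hB', ?_, ?_, by omega⟩ <;> rw [← card_pos] <;> omega

namespace SimpleGraph

variable {V : Type*} {G H : SimpleGraph V}

theorem exists_separation_of_not_connected_induce {T : Finset V} (hT : T.Nonempty)
    (h : ¬(G.induce (T : Set V)).Connected) :
    ∃ A B : Finset V, Disjoint A B ∧ A.Nonempty ∧ B.Nonempty ∧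
      (∀ a ∈ A, ∀ b ∈ B, ¬G.Adj a b) ∧ #A + #B = #T := by
  classical
  have : Nonempty (T : Set V) := hT.to_subtype
  obtain ⟨p, q, hpq⟩ : ∃ p q, ¬(G.induce (T : Set V)).Reachable p q := by
    simpa [connected_iff, Preconnected] using h
  let R := (G.induce (T : Set V)).Reachable p
  refine ⟨({x | R x} : Finset _).map (.subtype _), ({x | ¬R x} : Finset _).map (.subtype _),
    (disjoint_map _).2 (disjoint_filter_filter_not _ _ _), ⟨p, by simp [R]⟩,
    ⟨q, by simp [R, hpq]⟩, ?_, ?_⟩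
  · simp only [mem_map, mem_filter, mem_univ, true_and, Function.Embedding.subtype_apply]
    rintro _ ⟨a, ha, rfl⟩ _ ⟨b, hb, rfl⟩ hab
    exact hb (ha.trans (Adj.reachable (by simpa using hab)))
  · rw [card_map, card_map, card_filter_add_card_filter_not, card_univ]
    simp

theorem exists_separation_card_add_eq [Fintype V] {S : Finset V} {k : ℕ} (hS : #S ≤ k)
    (hk : k + 2 ≤ Fintype.card V) (h : ¬(G.induce ((S : Set V)ᶜ)).Connected) :
    ∃ A B : Finset V, Disjoint A B ∧ A.Nonempty ∧ B.Nonempty ∧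
      (∀ a ∈ A, ∀ b ∈ B, ¬G.Adj a b) ∧ #A + #B + k = Fintype.card V := by
  classical
  obtain ⟨A, B, hAB, hA, hB, hsep, hcard⟩ := exists_separation_of_not_connected_induce (T := Sᶜ)
    (card_pos.1 (by rw [card_compl]; omega)) (by rwa [coe_compl])
  obtain ⟨A', hA', B', hB', hA'ne, hB'ne, hc⟩ := exists_subset_subset_card_add_eq hA hB
    (c := Fintype.card V - k) (by omega) (by rw [hcard, card_compl]; omega)
  exact ⟨A', B', hAB.mono hA' hB', hA'ne, hB'ne, fun a ha b hb => hsep a (hA' ha) b (hB' hb),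
    by omega⟩

section Finite

variable [Fintype V]

theorem multZagreb1_mono (h : G ≤ H) : multZagreb1 G ≤ multZagreb1 H :=
  let := Classical.decRel G.Adj
  let := Classical.decRel H.Adj
  prod_le_prod' fun _ _ => Nat.pow_le_pow_left (degree_le_of_le h) 2

theorem eq_of_le_of_multZagreb1_eq (h : G ≤ H) (heq : multZagreb1 G = multZagreb1 H)
    (hne : multZagreb1 G ≠ 0) : G = H := by
  let := Classical.decRel G.Adj
  let := Classical.decRel H.Adj
  by_contra hGH
  obtain ⟨x, y, hH, hG⟩ : ∃ x y, H.Adj x y ∧ ¬G.Adj x y := by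
    by_contra! hall
    exact hGH (le_antisymm h fun x y => hall x y)
  have hsub : G.neighborFinset x ⊂ H.neighborFinset x :=
    Finset.ssubset_iff_subset_ne.2 ⟨fun w => by simpa using @h x w,
      fun he => hG <| (mem_neighborFinset G x y).1 (he ▸ (mem_neighborFinset H x y).2 hH)⟩
  refine heq.not_lt (prod_lt_prod (fun v _ => ?_) (fun v _ => ?_) ⟨x, mem_univ x, ?_⟩)
  · exact Nat.pos_of_ne_zero fun h0 => hne (prod_eq_zero (mem_univ v) h0)
  · exact Nat.pow_le_pow_left (degree_le_of_le h) 2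
  · simpa [← card_neighborFinset_eq_degree] using
      Nat.pow_lt_pow_left (card_lt_card hsub) two_ne_zero

theorem Iso.multZagreb1_eq {W : Type*} [Fintype W] {G' : SimpleGraph W} (e : G ≃g G') :
    multZagreb1 G = multZagreb1 G' := by
  classical
  simp only [multZagreb1]
  exact Fintype.prod_equiv e.toEquiv _ _ fun v => by simp

end Finite

/-- The paper's `K_k ∨ (K_a ∪ K_b)` on the vertex classes `(A ∪ B)ᶜ`, `A`, `B`: the largest graph
with no edge between `A` and `B`. -/
def completeSeparated (A B : Finset V) : SimpleGraph V := (fromRel fun x y => x ∈ A ∧ y ∈ B)ᶜ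

variable {A B : Finset V}

theorem completeSeparated_adj {x y : V} :
    (completeSeparated A B).Adj x y ↔ x ≠ y ∧ ¬(x ∈ A ∧ y ∈ B) ∧ ¬(x ∈ B ∧ y ∈ A) := by
  simp only [completeSeparated, compl_adj, fromRel_adj]
  tauto

theorem completeSeparated_comm : completeSeparated A B = completeSeparated B A := by
  ext x y
  simp only [completeSeparated_adj]
  tauto

theorem le_completeSeparated (h : ∀ a ∈ A, ∀ b ∈ B, ¬G.Adj a b) : G ≤ completeSeparated A B :=
  fun x y hxy => completeSeparated_adj.2
    ⟨hxy.ne, fun hx => h x hx.1 y hx.2 hxy, fun hx => h y hx.2 x hx.1 hxy.symm⟩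

section Finite

variable [Fintype V] [DecidableEq V] {v : V}

theorem neighborFinset_completeSeparated_of_mem_left
    [Fintype (neighborSet (completeSeparated A B) v)] (hAB : Disjoint A B) (hv : v ∈ A) :
    (completeSeparated A B).neighborFinset v = (insert v B)ᶜ := by
  ext w
  have := Finset.disjoint_left.1 hAB hv
  simp only [mem_neighborFinset, completeSeparated_adj, mem_compl, mem_insert]
  grind

theorem neighborFinset_completeSeparated_of_mem_right
    [Fintype (neighborSet (completeSeparated A B) v)] (hAB : Disjoint A B) (hv : v ∈ B) :
    (completeSeparated A B).neighborFinset v = (insert v A)ᶜ := by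
  ext w
  have := Finset.disjoint_right.1 hAB hv
  simp only [mem_neighborFinset, completeSeparated_adj, mem_compl, mem_insert]
  grind

theorem neighborFinset_completeSeparated_of_notMem
    [Fintype (neighborSet (completeSeparated A B) v)] (hA : v ∉ A) (hB : v ∉ B) :
    (completeSeparated A B).neighborFinset v = {v}ᶜ := by
  ext w
  simp only [mem_neighborFinset, completeSeparated_adj, mem_compl, mem_singleton]
  grind

theorem multZagreb1_completeSeparated (hAB : Disjoint A B) {c : ℕ}
    (hV : Fintype.card V = #A + #B + c) :
    multZagreb1 (completeSeparated A B) =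
      ((#A + c - 1) ^ #A * (#B + c - 1) ^ #B * (#A + #B + c - 1) ^ c) ^ 2 := by
  let := Classical.decRel (completeSeparated A B).Adj
  have hcard (s : Finset V) : #sᶜ = #A + #B + c - #s := by rw [card_compl, hV]
  have hA : ∀ v ∈ A, (completeSeparated A B).degree v = #A + c - 1 := fun v hv => by
    rw [← card_neighborFinset_eq_degree, neighborFinset_completeSeparated_of_mem_left hAB hv,
      hcard, card_insert_of_notMem (Finset.disjoint_left.1 hAB hv)]
    omega
  have hB : ∀ v ∈ B, (completeSeparated A B).degree v = #B + c - 1 := fun v hv => by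
    rw [← card_neighborFinset_eq_degree, neighborFinset_completeSeparated_of_mem_right hAB hv,
      hcard, card_insert_of_notMem (Finset.disjoint_right.1 hAB hv)]
    omega
  have hC : ∀ v ∈ (A ∪ B)ᶜ, (completeSeparated A B).degree v = #A + #B + c - 1 := fun v hv => by
    simp only [mem_compl, mem_union, not_or] at hv
    rw [← card_neighborFinset_eq_degree, neighborFinset_completeSeparated_of_notMem hv.1 hv.2,
      hcard, card_singleton]
  rw [multZagreb1, prod_pow, ← prod_mul_prod_compl (A ∪ B), prod_union hAB, prod_congr rfl hA,
    prod_congr rfl hB, prod_congr rfl hC, prod_const, prod_const, prod_const, hcard,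
    card_union_of_disjoint hAB]
  congr 3
  omega

theorem Knk_eq_completeSeparated (n k : ℕ) :
    Knk n k =
      completeSeparated {none} (({a : Fin (n - 1) | k ≤ (a : ℕ)} : Finset _).map .some) := by
  ext (_ | a) (_ | b) <;> simp [Knk, completeSeparated_adj]

theorem nonempty_iso_Knk {n k : ℕ} {u : V} {B : Finset V} (hV : Fintype.card V = n)
    (hB : #B = n - k - 1) (hu : u ∉ B) : Nonempty (completeSeparated {u} B ≃g Knk n k) := by
  have hn : 1 ≤ n := hV ▸ Fintype.card_pos_iff.2 ⟨u⟩
  rw [Knk_eq_completeSeparated]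
  obtain ⟨e, heu, heB⟩ := exists_equiv_apply_eq_and_apply_mem_iff (u' := none)
    (t := ({a : Fin (n - 1) | k ≤ (a : ℕ)} : Finset _).map .some)
    (by simp; omega) (by rw [card_map, card_filter_le_val, hB]; omega) hu (by simp)
  exact ⟨⟨e, fun {x y} => by simp [completeSeparated_adj, heB, ← heu, e.injective.eq_iff]⟩⟩

theorem multZagreb1_Knk {n k : ℕ} (hkn : k < n) :
    multZagreb1 (Knk n k) = (k * (n - 2) ^ (n - k - 1) * (n - 1) ^ k) ^ 2 := by
  rw [Knk_eq_completeSeparated, multZagreb1_completeSeparated (c := k) (by simp)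
    (by simp [card_filter_le_val]; omega), card_singleton, card_map, card_filter_le_val, pow_one]
  congr 4
  all_goals omega

theorem multZagreb1_completeSeparated_le (hAB : Disjoint A B) (hA : A.Nonempty)
    (hB : B.Nonempty) {k : ℕ} (hk : 1 ≤ k) (hV : Fintype.card V = #A + #B + k) :
    multZagreb1 (completeSeparated A B) ≤ multZagreb1 (Knk (Fintype.card V) k) := by
  have := hA.card_pos
  rw [multZagreb1_completeSeparated hAB hV, multZagreb1_Knk (by omega), hV,
    show #A + #B + k - k - 1 = #A + #B - 1 by omega]
  gcongr (?_ * _) ^ _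
  exact add_pow_mul_add_pow_le hA.card_pos hB.card_pos hk

theorem multZagreb1_completeSeparated_lt (hAB : Disjoint A B) (hA : 2 ≤ #A) (hB : 2 ≤ #B) {k : ℕ}
    (hk : 1 ≤ k) (hV : Fintype.card V = #A + #B + k) :
    multZagreb1 (completeSeparated A B) < multZagreb1 (Knk (Fintype.card V) k) := by
  rw [multZagreb1_completeSeparated hAB hV, multZagreb1_Knk (by omega), hV,
    show #A + #B + k - k - 1 = #A + #B - 1 by omega]
  exact Nat.pow_lt_pow_left (Nat.mul_lt_mul_of_pos_right (add_pow_mul_add_pow_lt hA hB hk)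
    (pow_pos (by omega) _)) two_ne_zero

end Finite

end SimpleGraph

open SimpleGraph in
theorem multZagreb1_le_of_vertexCut_general {V : Type*} [Fintype V] (n k : ℕ)
    (hk : 1 ≤ k) (hkn : k ≤ n - 2)
    (G : SimpleGraph V) (hV : Fintype.card V = n)
    (hcut : ∃ S : Finset V, S.card ≤ k ∧ ¬ (G.induce ((S : Set V)ᶜ)).Connected) :
    multZagreb1 G ≤ k ^ 2 * (n - 1) ^ (2 * k) * (n - 2) ^ (2 * (n - k - 1)) ∧
      (multZagreb1 G = k ^ 2 * (n - 1) ^ (2 * k) * (n - 2) ^ (2 * (n - k - 1)) ↔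
        Nonempty (G ≃g Knk n k)) := by
  classical
  obtain ⟨S, hS, hdis⟩ := hcut
  obtain ⟨A, B, hAB, hA, hB, hsep, hcard⟩ := exists_separation_card_add_eq hS (by omega) hdis
  subst hV
  have hKnk : k ^ 2 * (Fintype.card V - 1) ^ (2 * k) * (Fintype.card V - 2) ^
      (2 * (Fintype.card V - k - 1)) = multZagreb1 (Knk (Fintype.card V) k) := by
    rw [multZagreb1_Knk (by omega)]
    ring
  have hGH : G ≤ completeSeparated A B := le_completeSeparated hsep
  have hle := multZagreb1_completeSeparated_le hAB hA hB hk hcard.symm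
  rw [hKnk]
  refine ⟨(multZagreb1_mono hGH).trans hle, fun heq => ?_, fun ⟨e⟩ => e.multZagreb1_eq⟩
  have hHeq := le_antisymm hle (heq ▸ multZagreb1_mono hGH)
  obtain rfl : G = completeSeparated A B := eq_of_le_of_multZagreb1_eq hGH (heq.trans hHeq.symm)
    (by rw [heq, multZagreb1_Knk (by omega)]; simp [Nat.sub_eq_zero_iff_le]; omega)
  have h1 : #A = 1 ∨ #B = 1 := by
    by_contra! h
    exact (multZagreb1_completeSeparated_lt hAB (by have := hA.card_pos; omega)
      (by have := hB.card_pos; omega) hk hcard.symm).ne hHeq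
  rcases h1 with hA1 | hB1
  · obtain ⟨u, rfl⟩ := card_eq_one.1 hA1
    exact nonempty_iso_Knk rfl (by omega) (disjoint_singleton_left.1 hAB)
  · obtain ⟨u, rfl⟩ := card_eq_one.1 hB1
    rw [completeSeparated_comm]
    exact nonempty_iso_Knk rfl (by omega) (disjoint_singleton_right.1 hAB)

/-- **Theorem 1 for `Π₁` (Wang).** If `1 ≤ k ≤ n - 2` and `G` is a connected
graph on `n` vertices having a vertex cut of size at most `k`, then
`Π₁(G) ≤ k² (n-1)^{2k} (n-2)^{2(n-k-1)}`, with equality iff `G ≅ K_n^k`. -/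
theorem multZagreb1_le_of_vertexCut {V : Type*} [Fintype V] (n k : ℕ)
    (hk : 1 ≤ k) (hkn : k ≤ n - 2)
    (G : SimpleGraph V) (hV : Fintype.card V = n) (hG : G.Connected)
    (hcut : ∃ S : Finset V, S.card ≤ k ∧ ¬ (G.induce ((S : Set V)ᶜ)).Connected) :
    multZagreb1 G ≤ k ^ 2 * (n - 1) ^ (2 * k) * (n - 2) ^ (2 * (n - k - 1)) ∧
      (multZagreb1 G = k ^ 2 * (n - 1) ^ (2 * k) * (n - 2) ^ (2 * (n - k - 1)) ↔
        Nonempty (G ≃g Knk n k)) :=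
  multZagreb1_le_of_vertexCut_general n k hk hkn G hV hcut
end

section
/- Let n, k be natural numbers with 1 ≤ k ≤ n − 2, and let G be a connected finite simple graph on n vertices that has an edge cut of size at most k (i.e., there is a set F of at most k edges of G such that the graph obtained from G by deleting the edges of F is disconnected). Then Π₂(G) ≤ k^k · (n−1)^{k(n−1)} · (n−2)^{(n−2)(n−k−1)}, and equality holds if and only if G is isomorphic to K_n^k. -/
open Finset SimpleGraph

lemma pow_self_pos (t : ℕ) : 0 < t ^ t := by
  rcases t.eq_zero_or_pos with rfl | ht
  · simp
  · positivity

lemma pow_self_le_pow_self {s t : ℕ} (h : s ≤ t) : s ^ s ≤ t ^ t := by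
  rcases s.eq_zero_or_pos with rfl | hs
  · exact pow_self_pos t
  · calc s ^ s ≤ t ^ s := Nat.pow_le_pow_left h s
      _ ≤ t ^ t := Nat.pow_le_pow_right (hs.trans_le h) h

lemma pow_self_lt_pow_self {s t : ℕ} (hs : 0 < s) (h : s < t) : s ^ s < t ^ t :=
  calc s ^ s < t ^ s := Nat.pow_lt_pow_left h hs.ne'
    _ ≤ t ^ t := Nat.pow_le_pow_right (hs.trans h) h.le

lemma one_add_inv_pow_le_one_add_inv_pow {t u : ℕ} (ht : 0 < t) (h : t ≤ u) :
    (1 + (t : ℝ)⁻¹) ^ t ≤ (1 + (u : ℝ)⁻¹) ^ u := by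
  have hu : (0 : ℝ) < u := by exact_mod_cast ht.trans_le h
  have ht : (0 : ℝ) < t := by exact_mod_cast ht
  have hbernoulli : (1 + (t : ℝ)⁻¹) ^ ((t : ℝ) / u) ≤ 1 + (u : ℝ)⁻¹ := by
    have := rpow_one_add_le_one_add_mul_self (s := (t : ℝ)⁻¹) (by linarith [inv_pos.2 ht])
      (p := (t : ℝ) / u) (by positivity) (div_le_one_of_le₀ (by exact_mod_cast h) hu.le)
    rwa [div_mul_eq_mul_div, mul_inv_cancel₀ ht.ne', one_div] at this
  calc (1 + (t : ℝ)⁻¹) ^ t = ((1 + (t : ℝ)⁻¹) ^ ((t : ℝ) / u)) ^ u := by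
        rw [← Real.rpow_natCast _ u, ← Real.rpow_mul (by positivity), div_mul_cancel₀ _ hu.ne',
          Real.rpow_natCast]
    _ ≤ (1 + (u : ℝ)⁻¹) ^ u := by gcongr

lemma succ_pow_succ_mul_pow_le {t u : ℕ} (h : t ≤ u) :
    (t + 1) ^ (t + 1) * u ^ u ≤ t ^ t * (u + 1) ^ (u + 1) := by
  rcases t.eq_zero_or_pos with rfl | ht
  · simpa using pow_self_le_pow_self (Nat.le_succ u)
  have hu : 0 < u := ht.trans_le h
  have hpow : (t + 1) ^ t * u ^ u ≤ t ^ t * (u + 1) ^ u := by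
    have key := one_add_inv_pow_le_one_add_inv_pow ht h
    have hdiv : ∀ x : ℕ, 0 < x → 1 + (x : ℝ)⁻¹ = (x + 1) / x := fun x hx => by
      field_simp [(Nat.cast_pos.2 hx).ne']
    rw [hdiv t ht, hdiv u hu, div_pow, div_pow,
      div_le_div_iff₀ (by positivity) (by positivity)] at key
    rw [mul_comm (_ ^ u)] at key
    exact_mod_cast key
  calc (t + 1) ^ (t + 1) * u ^ u = (t + 1) * ((t + 1) ^ t * u ^ u) := by ring
    _ ≤ (u + 1) * (t ^ t * (u + 1) ^ u) := Nat.mul_le_mul (by omega) hpow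
    _ = t ^ t * (u + 1) ^ (u + 1) := by ring

lemma add_pow_self_mul_pow_le {s x m : ℕ} (h : s + x ≤ m + 1) :
    (s + x) ^ (s + x) * (m ^ m) ^ x ≤ s ^ s * ((m + 1) ^ (m + 1)) ^ x := by
  induction x with
  | zero => simp
  | succ x ih =>
    calc (s + (x + 1)) ^ (s + (x + 1)) * (m ^ m) ^ (x + 1)
        = (s + x + 1) ^ (s + x + 1) * m ^ m * (m ^ m) ^ x := by ring
      _ ≤ (s + x) ^ (s + x) * (m + 1) ^ (m + 1) * (m ^ m) ^ x :=
        Nat.mul_le_mul_right _ (succ_pow_succ_mul_pow_le (by omega))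
      _ = (s + x) ^ (s + x) * (m ^ m) ^ x * (m + 1) ^ (m + 1) := by ring
      _ ≤ s ^ s * ((m + 1) ^ (m + 1)) ^ x * (m + 1) ^ (m + 1) :=
        Nat.mul_le_mul_right _ (ih (by omega))
      _ = s ^ s * ((m + 1) ^ (m + 1)) ^ (x + 1) := by ring

lemma succ_pow_lt_pow_self_mul_pow {m k : ℕ} (hm : 2 ≤ m) (hk : 1 ≤ k) (hkm : k ≤ m) :
    (m + 1) ^ k < k ^ k * m ^ m := by
  calc (m + 1) ^ k < (2 * m) ^ k := Nat.pow_lt_pow_left (by omega) (by omega)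
    _ = 2 ^ k * m ^ k := mul_pow 2 m k
    _ ≤ k ^ k * m ^ m := by
      obtain rfl | hk2 := hk.eq_or_lt
      · have : m * 2 ≤ m ^ m := calc
          m * 2 ≤ m * m := Nat.mul_le_mul_left m hm
          _ = m ^ 2 := (sq m).symm
          _ ≤ m ^ m := Nat.pow_le_pow_right (by omega) hm
        simpa [mul_comm] using this
      · exact Nat.mul_le_mul (Nat.pow_le_pow_left hk2 k) (Nat.pow_le_pow_right (by omega) hkm)

lemma sub_one_pow_mul_succ_pow_lt {m k : ℕ} (hm : 2 ≤ m) (hk : 1 ≤ k) (hkm : k ≤ m) :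
    (m - 1) ^ (m * m) * ((m + 1) ^ (m + 1)) ^ k < k ^ k * (m ^ m) ^ (m + 1 + k) := by
  -- each factor `(m + 1)^m` is paid for by a factor `(m - 1)^m`, as `(m - 1)(m + 1) ≤ m²`
  have hXY : (m - 1) ^ m * (m + 1) ^ m ≤ (m ^ m) ^ 2 := by
    rw [← mul_pow, ← pow_mul, mul_comm m 2, pow_mul, sq]
    refine Nat.pow_le_pow_left ?_ m
    obtain ⟨j, rfl⟩ : ∃ j, m = j + 1 := ⟨m - 1, by omega⟩
    simp only [Nat.add_sub_cancel]; nlinarith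
  have hX : (m - 1) ^ m ≤ m ^ m := Nat.pow_le_pow_left (Nat.sub_le m 1) m
  have hA : 0 < m ^ m := by positivity
  have hZ := succ_pow_lt_pow_self_mul_pow hm hk hkm
  rw [pow_mul, pow_succ, mul_pow]
  generalize (m - 1) ^ m = X at hXY hX ⊢
  generalize (m + 1) ^ m = Y at hXY ⊢
  generalize (m + 1) ^ k = Z at hZ ⊢
  generalize m ^ m = A at hXY hX hA hZ ⊢
  obtain ⟨d, rfl⟩ : ∃ d, m = k + d := ⟨m - k, by omega⟩
  calc X ^ (k + d) * (Y ^ k * Z) = X ^ d * (X * Y) ^ k * Z := by ring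
    _ ≤ A ^ d * (A ^ 2) ^ k * Z := by gcongr
    _ < A ^ d * (A ^ 2) ^ k * (k ^ k * A) := by gcongr
    _ = k ^ k * A ^ (k + d + 1 + k) := by ring

lemma sub_one_pow_self_pow_le {t m : ℕ} (h : t ≤ m) :
    ((t - 1) ^ (t - 1)) ^ t ≤ (m - 1) ^ (m * (t - 1)) := by
  obtain _ | s := t
  · simp
  have hs : s ^ (s + 1) ≤ (m - 1) ^ m := by
    obtain rfl | hs := s.eq_zero_or_pos
    · simp
    calc s ^ (s + 1) ≤ (m - 1) ^ (s + 1) := Nat.pow_le_pow_left (by omega) _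
      _ ≤ (m - 1) ^ m := Nat.pow_le_pow_right (by omega) (by omega)
  calc ((s + 1 - 1) ^ (s + 1 - 1)) ^ (s + 1) = (s ^ (s + 1)) ^ s := by
        rw [Nat.add_sub_cancel, ← pow_mul, ← pow_mul, mul_comm]
    _ ≤ ((m - 1) ^ m) ^ s := Nat.pow_le_pow_left hs s
    _ = (m - 1) ^ (m * (s + 1 - 1)) := by rw [Nat.add_sub_cancel, pow_mul]

/-- `Π₂(K_{m+2}^c)`: its degrees are `c`, then `m + 1` (`c` times) and `m` (`m + 1 - c` times). -/
def knkBound (m c : ℕ) : ℕ := c ^ c * ((m + 1) ^ (m + 1)) ^ c * (m ^ m) ^ (m + 1 - c)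

lemma knkBound_sub_two {n k : ℕ} (hn : 2 ≤ n) :
    knkBound (n - 2) k = k ^ k * (n - 1) ^ (k * (n - 1)) * (n - 2) ^ ((n - 2) * (n - k - 1)) := by
  rw [knkBound, show n - 2 + 1 = n - 1 by omega, show n - 1 - k = n - k - 1 by omega,
    ← pow_mul, ← pow_mul, mul_comm (n - 1) k]

lemma knkBound_lt_knkBound {m c k : ℕ} (hm : 0 < m) (hck : c < k) (hk : k ≤ m + 1) :
    knkBound m c < knkBound m k := by
  have hab : m ^ m < (m + 1) ^ (m + 1) := pow_self_lt_pow_self hm (by omega)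
  have hk' : c ^ c ≤ k ^ k := pow_self_le_pow_self hck.le
  have ha : 0 < m ^ m := pow_self_pos m
  have hb : 0 < (m + 1) ^ (m + 1) := pow_self_pos (m + 1)
  unfold knkBound
  obtain ⟨d, rfl⟩ : ∃ d, k = c + d := ⟨k - c, by omega⟩
  rw [show m + 1 - c = d + (m + 1 - (c + d)) by omega]
  generalize m + 1 - (c + d) = r
  generalize m ^ m = a at hab ha ⊢
  generalize (m + 1) ^ (m + 1) = b at hab hb ⊢
  calc c ^ c * b ^ c * a ^ (d + r) = c ^ c * (b ^ c * a ^ r) * a ^ d := by ring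
    _ ≤ (c + d) ^ (c + d) * (b ^ c * a ^ r) * a ^ d := by gcongr
    _ < (c + d) ^ (c + d) * (b ^ c * a ^ r) * b ^ d := by
        have := pow_self_pos (c + d)
        gcongr
        omega
    _ = (c + d) ^ (c + d) * b ^ (c + d) * a ^ r := by ring

lemma knkBound_le_knkBound {m c k : ℕ} (hm : 0 < m) (hck : c ≤ k) (hk : k ≤ m + 1) :
    knkBound m c ≤ knkBound m k := by
  obtain rfl | hck := hck.eq_or_lt
  · rfl
  · exact (knkBound_lt_knkBound hm hck hk).le

section OneVertex

variable {V : Type*} [Fintype V] [DecidableEq V] {G : SimpleGraph V} [DecidableRel G.Adj]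
  {m : ℕ} {u v : V}

omit [DecidableEq V] in
lemma multZagreb2_eq_prod_s13 : multZagreb2 G = ∏ v, G.degree v ^ G.degree v := by
  unfold multZagreb2
  congr!

lemma multZagreb2_eq_mul_prod_erase (u : V) :
    multZagreb2 G = G.degree u ^ G.degree u * ∏ v ∈ univ.erase u, G.degree v ^ G.degree v := by
  rw [multZagreb2_eq_prod_s13, mul_prod_erase _ (fun v => G.degree v ^ G.degree v) (mem_univ u)]

lemma degree_eq_card_erase_add (u v : V) :
    G.degree v = #((G.neighborFinset v).erase u) + if G.Adj u v then 1 else 0 := by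
  split_ifs with h
  · rw [card_erase_add_one (by simpa using h.symm), card_neighborFinset_eq_degree]
  · rw [erase_eq_of_notMem (by simpa [adj_comm] using h), card_neighborFinset_eq_degree, add_zero]

lemma neighborFinset_erase_subset (u v : V) :
    (G.neighborFinset v).erase u ⊆ (univ.erase v).erase u := by
  intro w hw
  simp only [mem_erase, mem_neighborFinset] at hw ⊢
  exact ⟨hw.1, hw.2.ne.symm, mem_univ w⟩

lemma card_erase_erase_univ (hV : Fintype.card V = m + 2) (hvu : v ≠ u) :
    #((univ.erase v).erase u) = m := by
  rw [card_erase_of_mem (by simpa using hvu.symm), card_erase_of_mem (mem_univ v), card_univ, hV]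
  rfl

lemma degree_le_of_ne (hV : Fintype.card V = m + 2) (hvu : v ≠ u) :
    G.degree v ≤ if G.Adj u v then m + 1 else m := by
  have := card_le_card (neighborFinset_erase_subset (G := G) u v)
  rw [card_erase_erase_univ hV hvu] at this
  rw [degree_eq_card_erase_add u v]
  split_ifs <;> omega

lemma degree_eq_iff_of_ne (hV : Fintype.card V = m + 2) (hvu : v ≠ u) :
    G.degree v = (if G.Adj u v then m + 1 else m) ↔ ∀ w, w ≠ u → w ≠ v → G.Adj v w := by
  have hsub := neighborFinset_erase_subset (G := G) u v
  have hcard : G.degree v = (if G.Adj u v then m + 1 else m) ↔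
      #((univ.erase v).erase u) ≤ #((G.neighborFinset v).erase u) := by
    have := card_le_card hsub
    rw [card_erase_erase_univ hV hvu] at this ⊢
    rw [degree_eq_card_erase_add u v]
    split_ifs <;> omega
  rw [hcard, eq_iff_card_le_of_subset hsub, Subset.antisymm_iff, and_iff_right hsub]
  simp only [subset_iff, mem_erase, mem_univ, and_true, mem_neighborFinset]
  exact forall_congr' fun w => ⟨fun h hu hv => (h ⟨hu, hv⟩).2, fun h ⟨hu, hv⟩ => ⟨hu, h hu hv⟩⟩

lemma prod_erase_ite_pow_self (hV : Fintype.card V = m + 2) (u : V) :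
    ∏ v ∈ univ.erase u, (if G.Adj u v then m + 1 else m) ^ (if G.Adj u v then m + 1 else m) =
      ((m + 1) ^ (m + 1)) ^ G.degree u * (m ^ m) ^ (m + 1 - G.degree u) := by
  have hite : ∀ v, (if G.Adj u v then m + 1 else m) ^ (if G.Adj u v then m + 1 else m) =
      if G.Adj u v then (m + 1) ^ (m + 1) else m ^ m := fun v => by split_ifs <;> rfl
  have hN : (univ.erase u).filter (G.Adj u) = G.neighborFinset u := by
    ext w
    simp only [mem_filter, mem_erase, mem_univ, and_true, mem_neighborFinset, and_iff_right_iff_imp]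
    exact fun h => h.ne.symm
  have hsplit := card_filter_add_card_filter_not (s := univ.erase u) (G.Adj u)
  rw [hN, card_neighborFinset_eq_degree, card_erase_of_mem (mem_univ u), card_univ, hV] at hsplit
  simp_rw [hite]
  rw [prod_ite, prod_const, prod_const, hN, card_neighborFinset_eq_degree]
  congr
  omega

lemma multZagreb2_le_knkBound (hV : Fintype.card V = m + 2) (u : V) :
    multZagreb2 G ≤ knkBound m (G.degree u) := by
  rw [multZagreb2_eq_mul_prod_erase u, knkBound, mul_assoc, ← prod_erase_ite_pow_self hV u]
  exact Nat.mul_le_mul_left _ (prod_le_prod' fun v hv =>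
    pow_self_le_pow_self (degree_le_of_ne hV (ne_of_mem_erase hv)))

lemma multZagreb2_eq_knkBound_of_adj (hV : Fintype.card V = m + 2)
    (hadj : ∀ v w, v ≠ u → w ≠ u → v ≠ w → G.Adj v w) :
    multZagreb2 G = knkBound m (G.degree u) := by
  rw [multZagreb2_eq_mul_prod_erase u, knkBound, mul_assoc, ← prod_erase_ite_pow_self hV u]
  congr 1
  refine prod_congr rfl fun v hv => ?_
  have hvu := ne_of_mem_erase hv
  rw [(degree_eq_iff_of_ne hV hvu).2 fun w hwu hwv => hadj v w hvu hwu hwv.symm]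

lemma adj_of_multZagreb2_eq_knkBound (hV : Fintype.card V = m + 2)
    (hpos : ∀ v, 0 < G.degree v) (h : multZagreb2 G = knkBound m (G.degree u)) :
    ∀ v w, v ≠ u → w ≠ u → v ≠ w → G.Adj v w := by
  by_contra! hne
  obtain ⟨v, w, hvu, hwu, hvw, hnadj⟩ := hne
  have hlt : G.degree v < if G.Adj u v then m + 1 else m :=
    (degree_le_of_ne hV hvu).lt_of_ne fun heq =>
      hnadj ((degree_eq_iff_of_ne hV hvu).1 heq w hwu hvw.symm)
  refine h.not_lt ?_
  rw [multZagreb2_eq_mul_prod_erase u, knkBound, mul_assoc, ← prod_erase_ite_pow_self hV u]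
  refine mul_lt_mul_of_pos_left (prod_lt_prod (fun v _ => pow_self_pos _)
    (fun v hv => pow_self_le_pow_self (degree_le_of_ne hV (ne_of_mem_erase hv)))
    ⟨v, mem_erase.2 ⟨hvu, mem_univ v⟩, pow_self_lt_pow_self (hpos v) hlt⟩) (pow_self_pos _)

end OneVertex

section Knk

variable {n k : ℕ}

@[simp] lemma Knk_adj_some_some {a b : Fin (n - 1)} :
    (Knk n k).Adj (some a) (some b) ↔ a ≠ b := by
  simp [Knk]

@[simp] lemma Knk_adj_none_some {a : Fin (n - 1)} :
    (Knk n k).Adj none (some a) ↔ (a : ℕ) < k := by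
  simp [Knk]

lemma Fin.card_subtype_val_lt (hk : k ≤ n) : Fintype.card {a : Fin n // (a : ℕ) < k} = k := by
  rw [Fintype.card_subtype, Fin.card_filter_val_lt, min_eq_right hk]

lemma degree_Knk_none [DecidableRel (Knk n k).Adj] (hk : k ≤ n - 1) :
    (Knk n k).degree none = k := by
  have hN : (Knk n k).neighborFinset none =
      ({a : Fin (n - 1) | (a : ℕ) < k} : Finset _).map .some := by
    ext (_ | a) <;> simp
  rw [← card_neighborFinset_eq_degree, hN, card_map, Fin.card_filter_val_lt, min_eq_right hk]

end Knk

lemma SimpleGraph.Iso.multZagreb2_eq {V W : Type*} [Fintype V] [Fintype W] {G : SimpleGraph V}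
    {H : SimpleGraph W} (e : G ≃g H) : multZagreb2 G = multZagreb2 H := by
  classical
  unfold multZagreb2
  exact Fintype.prod_equiv e.toEquiv _ _ fun v => by simp

lemma nonempty_iso_Knk {V : Type*} [Fintype V] [DecidableEq V] {G : SimpleGraph V}
    [DecidableRel G.Adj] {n k : ℕ} (hV : Fintype.card V = n) (hk : k ≤ n - 1) {u : V}
    (hdeg : G.degree u = k) (hadj : ∀ v w, v ≠ u → w ≠ u → v ≠ w → G.Adj v w) :
    Nonempty (G ≃g Knk n k) := by
  have hcardNe : Fintype.card {v // v ≠ u} = n - 1 := by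
    rw [Fintype.card_subtype_compl, Fintype.card_subtype_eq, hV]
  have hcardAdj : Fintype.card {v : {v // v ≠ u} // G.Adj u v} = k := by
    rw [Fintype.card_congr (Equiv.subtypeSubtypeEquivSubtype fun h => h.ne.symm),
      ← hdeg, ← card_neighborSet_eq_degree]
    rfl
  have hcardLt := Fin.card_subtype_val_lt hk
  let e₁ : {a : Fin (n - 1) // (a : ℕ) < k} ≃ {v : {v // v ≠ u} // G.Adj u v} :=
    Fintype.equivOfCardEq (hcardLt.trans hcardAdj.symm)
  let e₂ : {a : Fin (n - 1) // ¬(a : ℕ) < k} ≃ {v : {v // v ≠ u} // ¬G.Adj u v} :=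
    Fintype.equivOfCardEq (by
      rw [Fintype.card_subtype_compl, Fintype.card_subtype_compl, hcardLt, hcardAdj,
        Fintype.card_fin, hcardNe])
  let σ : Fin (n - 1) ≃ {v // v ≠ u} :=
    (Equiv.sumCompl _).symm.trans ((Equiv.sumCongr e₁ e₂).trans (Equiv.sumCompl _))
  have hσ : ∀ a, G.Adj u (σ a) ↔ (a : ℕ) < k := by
    intro a
    by_cases ha : (a : ℕ) < k
    · simpa [σ, Equiv.sumCompl_symm_apply_of_pos ha, ha] using (e₁ ⟨a, ha⟩).2
    · simpa [σ, Equiv.sumCompl_symm_apply_of_neg ha, ha] using (e₂ ⟨a, ha⟩).2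
  let e : Option (Fin (n - 1)) ≃ V := (Equiv.optionCongr σ).trans (Equiv.optionSubtypeNe u)
  refine ⟨(RelIso.mk e fun {x y} => ?_).symm⟩
  rcases x with _ | a <;> rcases y with _ | b
  · simp [e]
  · simpa [e] using hσ b
  · simpa [e, adj_comm] using hσ a
  · simp only [e, Equiv.trans_apply, Equiv.optionCongr_apply, Option.map_some,
      Equiv.optionSubtypeNe_some, Knk_adj_some_some]
    exact ⟨fun h hab => h.ne (by rw [hab]), fun hab =>
      hadj _ _ (σ a).2 (σ b).2 fun h => hab (σ.injective (Subtype.ext h))⟩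

lemma multZagreb2_Knk {m k : ℕ} (hk : k ≤ m + 1) :
    multZagreb2 (Knk (m + 2) k) = knkBound m k := by
  classical
  have h := multZagreb2_eq_knkBound_of_adj (G := Knk (m + 2) k) (u := none) (m := m) (by simp) ?_
  · rwa [degree_Knk_none (by omega)] at h
  · rintro (_ | a) (_ | b) ha hb hab
    all_goals first | contradiction | exact Knk_adj_some_some.2 fun h => hab (congrArg some h)

section Cut

variable {V : Type*} [Fintype V] [DecidableEq V] {G : SimpleGraph V} {m k : ℕ}

lemma exists_cut_of_not_connected_deleteEdges [Nonempty V] {F : Finset (Sym2 V)}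
    (hF : ¬(G.deleteEdges ↑F).Connected) :
    ∃ S : Finset V, S.Nonempty ∧ Sᶜ.Nonempty ∧ ∀ x ∈ S, ∀ y ∉ S, G.Adj x y → s(x, y) ∈ F := by
  classical
  obtain ⟨v, w, hvw⟩ : ∃ v w, ¬(G.deleteEdges ↑F).Reachable v w := by
    by_contra! h
    exact hF ⟨h⟩
  refine ⟨({x | (G.deleteEdges ↑F).Reachable v x} : Finset V), ⟨v, by simp⟩,
    ⟨w, by simpa using hvw⟩, fun x hx y hy hxy => ?_⟩
  by_contra hxyF
  simp only [mem_filter, mem_univ, true_and] at hx hy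
  exact hy (hx.trans (deleteEdges_adj.2 ⟨hxy, hxyF⟩).reachable)

variable [DecidableRel G.Adj]

lemma degree_le_card_sub_one_add {S : Finset V} {v : V} (hv : v ∈ S) :
    G.degree v ≤ #S - 1 + #{w ∈ Sᶜ | G.Adj v w} := by
  have hin : {w ∈ G.neighborFinset v | w ∈ S} ⊆ S.erase v := fun w hw => by
    simp only [mem_filter, mem_neighborFinset] at hw
    exact mem_erase.2 ⟨hw.1.ne.symm, hw.2⟩
  have hout : {w ∈ G.neighborFinset v | w ∉ S} ⊆ {w ∈ Sᶜ | G.Adj v w} := fun w hw => by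
    simp only [mem_filter, mem_neighborFinset, mem_compl] at hw ⊢
    exact ⟨hw.2, hw.1⟩
  have := card_le_card hin
  have := card_le_card hout
  rw [card_erase_of_mem hv] at *
  rw [← card_neighborFinset_eq_degree, ← card_filter_add_card_filter_not (· ∈ S)]
  omega

lemma sum_card_adj_compl_le_card {S : Finset V} {F : Finset (Sym2 V)}
    (hF : ∀ x ∈ S, ∀ y ∉ S, G.Adj x y → s(x, y) ∈ F) :
    ∑ v ∈ S, #{w ∈ Sᶜ | G.Adj v w} ≤ #F := by
  rw [← card_sigma]
  refine card_le_card_of_injOn (fun p => s(p.1, p.2)) (fun p hp => ?_) fun p hp q hq h => ?_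
  · simp only [mem_coe, mem_sigma, mem_filter, mem_compl] at hp
    exact hF _ hp.1 _ hp.2.1 hp.2.2
  · simp only [mem_coe, mem_sigma, mem_filter, mem_compl] at hp hq
    rcases Sym2.eq_iff.1 h with ⟨h₁, h₂⟩ | ⟨h₁, -⟩
    · exact Sigma.ext h₁ (heq_of_eq h₂)
    · exact absurd (h₁ ▸ hp.1) hq.2.1

lemma prod_pow_self_mul_le (hV : Fintype.card V = m + 2) {S : Finset V} (hS : #S ≤ m)
    (hSk : ∑ v ∈ S, #{w ∈ Sᶜ | G.Adj v w} ≤ k) :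
    (∏ v ∈ S, G.degree v ^ G.degree v) * (m ^ m) ^ k ≤
      (m - 1) ^ (m * (#S - 1)) * ((m + 1) ^ (m + 1)) ^ k := by
  have hSc : #S + #Sᶜ = m + 2 := by rw [card_add_card_compl, hV]
  have hvertex : ∀ v ∈ S, G.degree v ^ G.degree v * (m ^ m) ^ #{w ∈ Sᶜ | G.Adj v w} ≤
      (#S - 1) ^ (#S - 1) * ((m + 1) ^ (m + 1)) ^ #{w ∈ Sᶜ | G.Adj v w} := fun v hv => by
    have hx : #{w ∈ Sᶜ | G.Adj v w} ≤ #Sᶜ := card_filter_le _ _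
    have hS1 : 1 ≤ #S := card_pos.2 ⟨v, hv⟩
    calc _ ≤ _ := Nat.mul_le_mul_right _ (pow_self_le_pow_self (degree_le_card_sub_one_add hv))
      _ ≤ _ := add_pow_self_mul_pow_le (by omega)
  have hside := prod_le_prod' hvertex
  rw [prod_mul_distrib, prod_mul_distrib, prod_const, prod_pow_eq_pow_sum,
    prod_pow_eq_pow_sum] at hside
  set e := ∑ v ∈ S, #{w ∈ Sᶜ | G.Adj v w}
  calc (∏ v ∈ S, G.degree v ^ G.degree v) * (m ^ m) ^ k
      = (∏ v ∈ S, G.degree v ^ G.degree v) * (m ^ m) ^ e * (m ^ m) ^ (k - e) := by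
        rw [mul_assoc, ← pow_add, Nat.add_sub_cancel' hSk]
    _ ≤ ((#S - 1) ^ (#S - 1)) ^ #S * ((m + 1) ^ (m + 1)) ^ e * ((m + 1) ^ (m + 1)) ^ (k - e) :=
        Nat.mul_le_mul hside (Nat.pow_le_pow_left (pow_self_le_pow_self (by omega)) _)
    _ ≤ (m - 1) ^ (m * (#S - 1)) * ((m + 1) ^ (m + 1)) ^ k := by
        rw [mul_assoc, ← pow_add, Nat.add_sub_cancel' hSk]
        exact Nat.mul_le_mul_right _ (sub_one_pow_self_pow_le hS)

lemma multZagreb2_lt_knkBound_of_two_le_card (hV : Fintype.card V = m + 2) (hk : 1 ≤ k)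
    (hkm : k ≤ m) {S : Finset V} (hS : 2 ≤ #S) (hSc : 2 ≤ #Sᶜ)
    (hSk : ∑ v ∈ S, #{w ∈ Sᶜ | G.Adj v w} ≤ k) (hSck : ∑ v ∈ Sᶜ, #{w ∈ S | G.Adj v w} ≤ k) :
    multZagreb2 G < knkBound m k := by
  have hsum : #S + #Sᶜ = m + 2 := by rw [card_add_card_compl, hV]
  have hA := prod_pow_self_mul_le hV (by omega) hSk
  have hB := prod_pow_self_mul_le (S := Sᶜ) (k := k) hV (by omega) (by rwa [compl_compl])
  have hexp : (m - 1) ^ (m * (#S - 1)) * (m - 1) ^ (m * (#Sᶜ - 1)) = (m - 1) ^ (m * m) := by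
    rw [← pow_add, ← mul_add, show #S - 1 + (#Sᶜ - 1) = m by omega]
  refine Nat.lt_of_mul_lt_mul_right (a := (m ^ m) ^ k * (m ^ m) ^ k) ?_
  calc multZagreb2 G * ((m ^ m) ^ k * (m ^ m) ^ k)
      = ((∏ v ∈ S, G.degree v ^ G.degree v) * (m ^ m) ^ k) *
          ((∏ v ∈ Sᶜ, G.degree v ^ G.degree v) * (m ^ m) ^ k) := by
        rw [multZagreb2_eq_prod_s13, ← prod_mul_prod_compl S]; ring
    _ ≤ ((m - 1) ^ (m * (#S - 1)) * ((m + 1) ^ (m + 1)) ^ k) *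
          ((m - 1) ^ (m * (#Sᶜ - 1)) * ((m + 1) ^ (m + 1)) ^ k) := Nat.mul_le_mul hA hB
    _ = (m - 1) ^ (m * m) * ((m + 1) ^ (m + 1)) ^ k * ((m + 1) ^ (m + 1)) ^ k := by
        rw [← hexp]; ring
    _ < k ^ k * (m ^ m) ^ (m + 1 + k) * ((m + 1) ^ (m + 1)) ^ k :=
        Nat.mul_lt_mul_of_pos_right (sub_one_pow_mul_succ_pow_lt (by omega) hk hkm)
          (by positivity)
    _ = knkBound m k * ((m ^ m) ^ k * (m ^ m) ^ k) := by
        rw [knkBound, show m + 1 + k = m + 1 - k + k + k by omega]; ring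

lemma degree_le_sum_card_adj_compl {T : Finset V} {v : V} (hv : v ∈ T) (hT : #T ≤ 1) :
    G.degree v ≤ ∑ w ∈ T, #{x ∈ Tᶜ | G.Adj w x} := by
  have := degree_le_card_sub_one_add (G := G) hv
  have := single_le_sum (f := fun w => #{x ∈ Tᶜ | G.Adj w x}) (fun _ _ => Nat.zero_le _) hv
  omega

lemma exists_degree_le_or_multZagreb2_lt (hV : Fintype.card V = m + 2) (hk : 1 ≤ k)
    (hkm : k ≤ m) {F : Finset (Sym2 V)} (hFk : #F ≤ k) (hF : ¬(G.deleteEdges ↑F).Connected) :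
    (∃ u, G.degree u ≤ k) ∨ multZagreb2 G < knkBound m k := by
  have : Nonempty V := Fintype.card_pos_iff.1 (by omega)
  obtain ⟨S, ⟨u, hu⟩, ⟨u', hu'⟩, hcross⟩ := exists_cut_of_not_connected_deleteEdges hF
  have hcross' : ∀ x ∈ Sᶜ, ∀ y ∉ Sᶜ, G.Adj x y → s(x, y) ∈ F := fun x hx y hy hxy => by
    rw [Sym2.eq_swap]
    exact hcross y (by simpa using hy) x (mem_compl.1 hx) hxy.symm
  have hSk := (sum_card_adj_compl_le_card hcross).trans hFk
  have hSck := (sum_card_adj_compl_le_card hcross').trans hFk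
  rcases le_or_gt #S 1 with hS | hS
  · exact .inl ⟨u, (degree_le_sum_card_adj_compl hu hS).trans hSk⟩
  rcases le_or_gt #Sᶜ 1 with hSc | hSc
  · exact .inl ⟨u', (degree_le_sum_card_adj_compl hu' hSc).trans hSck⟩
  rw [compl_compl] at hSck
  exact .inr (multZagreb2_lt_knkBound_of_two_le_card hV hk hkm hS hSc hSk hSck)

end Cut

/-- **Theorem 2 for `Π₂` (Wang).** If `1 ≤ k ≤ n - 2` and `G` is a connected
graph on `n` vertices having a edge cut of size at most `k`, then
`Π₂(G) ≤ k^k (n-1)^{k(n-1)} (n-2)^{(n-2)(n-k-1)}`, with equality iff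
`G ≅ K_n^k`. -/
theorem multZagreb2_le_of_edgeCut {V : Type*} [Fintype V] (n k : ℕ)
    (hk : 1 ≤ k) (hkn : k ≤ n - 2)
    (G : SimpleGraph V) (hV : Fintype.card V = n) (hG : G.Connected)
    (hcut : ∃ F : Finset (Sym2 V), (F : Set (Sym2 V)) ⊆ G.edgeSet ∧ F.card ≤ k ∧
      ¬ (G.deleteEdges (F : Set (Sym2 V))).Connected) :
    multZagreb2 G ≤
        k ^ k * (n - 1) ^ (k * (n - 1)) * (n - 2) ^ ((n - 2) * (n - k - 1)) ∧
      (multZagreb2 G =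
          k ^ k * (n - 1) ^ (k * (n - 1)) * (n - 2) ^ ((n - 2) * (n - k - 1)) ↔
        Nonempty (G ≃g Knk n k)) := by
  classical
  rw [← knkBound_sub_two (by omega)]
  obtain ⟨m, rfl⟩ : ∃ m, n = m + 2 := ⟨n - 2, by omega⟩
  rw [Nat.add_sub_cancel]
  obtain ⟨F, -, hFk, hF⟩ := hcut
  have hkm : k ≤ m := by omega
  have eq_of_iso : Nonempty (G ≃g Knk (m + 2) k) → multZagreb2 G = knkBound m k :=
    fun ⟨e⟩ => e.multZagreb2_eq.trans (multZagreb2_Knk (by omega))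
  rcases exists_degree_le_or_multZagreb2_lt (G := G) hV hk hkm hFk hF with ⟨u, hu⟩ | hlt
  · have hle := multZagreb2_le_knkBound (G := G) hV u
    refine ⟨hle.trans (knkBound_le_knkBound (by omega) hu (by omega)), fun heq => ?_, eq_of_iso⟩
    have hdeg : G.degree u = k := by
      by_contra hne
      exact (hle.trans_lt (knkBound_lt_knkBound (by omega) (hu.lt_of_ne hne) (by omega))).ne heq
    have : Nontrivial V := Fintype.one_lt_card_iff_nontrivial.1 (by omega)
    exact nonempty_iso_Knk hV (by omega) hdeg (adj_of_multZagreb2_eq_knkBound hV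
      (fun v => hG.preconnected.degree_pos_of_nontrivial v) (hdeg ▸ heq))
  · exact ⟨hlt.le, fun h => absurd h hlt.ne, fun h => absurd (eq_of_iso h) hlt.ne⟩
end

section
/- Let G be a connected finite simple graph on n ≥ 2 vertices. Then Π₁(G) ≥ (n−1)², and equality holds if and only if G is isomorphic to the star S_n. -/
/-!
Write `Π₁(G) = (∏ d(v))²` and `d(v) = x(v) + 1` with `x(v) ≥ 0`, as every vertex of a connected
graph on at least two vertices has a neighbour. Expanding, `∏ (x(v) + 1) ≥ 1 + ∑ x(v)`, and by the
handshake lemma `∑ x(v) = 2|E| - n ≥ n - 2` since a connected graph has at least `n - 1` edges;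
hence `∏ d(v) ≥ n - 1`. The expansion also contains the term `x(u) x(w)` for any two vertices
`u ≠ w`, so in the case of equality at most one vertex has degree above `1`, and then the product
of the degrees is the degree of that vertex: it is adjacent to all others, which are leaves.
-/

open Finset

namespace Finset

variable {ι : Type*} (s : Finset ι) (f : ι → ℕ)

theorem sum_add_one_le_prod_add_one : ∑ i ∈ s, f i + 1 ≤ ∏ i ∈ s, (f i + 1) := by
  classical
  induction s using Finset.induction_on with
  | empty => simp
  | insert a s ha ih =>
    rw [sum_insert ha, prod_insert ha]
    calc f a + ∑ i ∈ s, f i + 1 ≤ (f a + 1) * (∑ i ∈ s, f i + 1) := by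
          generalize ∑ i ∈ s, f i = S
          nlinarith
      _ ≤ (f a + 1) * ∏ i ∈ s, (f i + 1) := Nat.mul_le_mul_left _ ih

theorem sum_add_one_add_mul_le_prod_add_one [DecidableEq ι] {u w : ι} (hu : u ∈ s) (hw : w ∈ s)
    (huw : u ≠ w) : ∑ i ∈ s, f i + 1 + f u * f w ≤ ∏ i ∈ s, (f i + 1) := by
  have hw' : w ∈ s.erase u := mem_erase.mpr ⟨huw.symm, hw⟩
  rw [← add_sum_erase s f hu, ← add_sum_erase _ f hw', ← mul_prod_erase s _ hu,
    ← mul_prod_erase _ _ hw']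
  calc f u + (f w + ∑ i ∈ (s.erase u).erase w, f i) + 1 + f u * f w
      ≤ (f u + 1) * ((f w + 1) * (∑ i ∈ (s.erase u).erase w, f i + 1)) := by
        generalize ∑ i ∈ (s.erase u).erase w, f i = S
        nlinarith [Nat.zero_le (f u * S), Nat.zero_le (f w * S), Nat.zero_le (f u * f w * S)]
    _ ≤ (f u + 1) * ((f w + 1) * ∏ i ∈ (s.erase u).erase w, (f i + 1)) := by
      gcongr
      exact sum_add_one_le_prod_add_one _ f

end Finset

namespace SimpleGraph

variable {V W : Type*} {G : SimpleGraph V}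

protected def Iso.starGraph (e : V ≃ W) (r : V) : starGraph r ≃g starGraph (e r) :=
  ⟨e, by simp [e.injective.eq_iff]⟩

theorem nonempty_iso_starGraph_of_card_eq [Fintype V] [Fintype W] (r : V) (r' : W)
    (h : Fintype.card V = Fintype.card W) : Nonempty (starGraph r ≃g starGraph r') := by
  classical
  let f := Fintype.equivOfCardEq h
  let e := f.trans (Equiv.swap (f r) r')
  have her : e r = r' := Equiv.swap_apply_left (f r) r'
  exact her ▸ ⟨Iso.starGraph e r⟩

theorem completeBipartiteGraph_unit_eq_starGraph :
    completeBipartiteGraph Unit W = starGraph (Sum.inl ()) := by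
  ext a b
  cases a <;> cases b <;> simp

theorem prod_degree_starGraph [Fintype V] [DecidableEq V] (r : V) :
    ∏ v, (starGraph r).degree v = Fintype.card V - 1 := by
  rw [Fintype.prod_eq_single r fun v hv => degree_starGraph_of_ne_center hv,
    degree_starGraph_center]

theorem eq_starGraph_of_degree [Fintype V] [DecidableRel G.Adj] {c : V}
    (hc : G.degree c = Fintype.card V - 1) (hleaf : ∀ v ≠ c, G.degree v = 1) :
    G = starGraph c := by
  have hcu : G.IsUniversal c := (G.degree_eq_card_sub_one c).mp hc
  ext a b
  rw [starGraph_adj]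
  constructor
  · intro hab
    refine ⟨hab.ne, or_iff_not_imp_left.mpr fun ha => ?_⟩
    obtain ⟨w, -, huniq⟩ := degree_eq_one_iff_existsUnique_adj.mp (hleaf a ha)
    exact (huniq b hab).trans (huniq c (hcu (Ne.symm ha)).symm).symm
  · rintro ⟨hab, rfl | rfl⟩
    · exact hcu hab
    · exact (hcu hab.symm).symm

section Connected

variable [Fintype V] [DecidableRel G.Adj] [Nontrivial V] (hG : G.Connected)
include hG

theorem Connected.degree_sub_one_add_one (v : V) : G.degree v - 1 + 1 = G.degree v :=
  Nat.sub_add_cancel (hG.preconnected.degree_pos_of_nontrivial v)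

theorem Connected.card_le_sum_degree_sub_one_add_two :
    Fintype.card V ≤ ∑ v, (G.degree v - 1) + 2 := by
  classical
  have hedges : Fintype.card V ≤ #G.edgeFinset + 1 := by
    simpa [Nat.card_eq_fintype_card, edgeFinset_card] using hG.card_vert_le_card_edgeSet_add_one
  have hsum : ∑ v, (G.degree v - 1) + Fintype.card V = 2 * #G.edgeFinset := by
    rw [← G.sum_degrees_eq_twice_card_edges, Fintype.card_eq_sum_ones, ← sum_add_distrib]
    simp only [hG.degree_sub_one_add_one]
  omega

theorem Connected.card_sub_one_le_prod_degree : Fintype.card V - 1 ≤ ∏ v, G.degree v :=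
  calc Fintype.card V - 1 ≤ ∑ v, (G.degree v - 1) + 1 := by
        have := hG.card_le_sum_degree_sub_one_add_two
        omega
    _ ≤ ∏ v, (G.degree v - 1 + 1) := sum_add_one_le_prod_add_one _ _
    _ = ∏ v, G.degree v := by simp only [hG.degree_sub_one_add_one]

theorem Connected.degree_eq_one_or_of_prod_degree_eq (h : ∏ v, G.degree v = Fintype.card V - 1)
    {u w : V} (huw : u ≠ w) : G.degree u = 1 ∨ G.degree w = 1 := by
  classical
  have hprod := sum_add_one_add_mul_le_prod_add_one univ (fun v => G.degree v - 1) (mem_univ u)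
    (mem_univ w) huw
  simp only [hG.degree_sub_one_add_one, h] at hprod
  have hsum := hG.card_le_sum_degree_sub_one_add_two
  have hu := hG.preconnected.degree_pos_of_nontrivial u
  have hw := hG.preconnected.degree_pos_of_nontrivial w
  have : (G.degree u - 1) * (G.degree w - 1) = 0 := by omega
  rcases mul_eq_zero.mp this with hu1 | hw1 <;> omega

theorem Connected.exists_eq_starGraph_of_prod_degree_eq
    (h : ∏ v, G.degree v = Fintype.card V - 1) : ∃ c, G = starGraph c := by
  have hcenter : ∃ c, ∀ v ≠ c, G.degree v = 1 := by
    by_cases hall : ∀ v, G.degree v = 1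
    · obtain ⟨c⟩ := (inferInstance : Nonempty V)
      exact ⟨c, fun v _ => hall v⟩
    · push Not at hall
      obtain ⟨c, hc⟩ := hall
      exact ⟨c, fun v hv => (hG.degree_eq_one_or_of_prod_degree_eq h hv).resolve_right hc⟩
  obtain ⟨c, hleaf⟩ := hcenter
  refine ⟨c, eq_starGraph_of_degree ?_ hleaf⟩
  rwa [← Fintype.prod_eq_single c hleaf]

end Connected

end SimpleGraph

open SimpleGraph

theorem multZagreb1_eq_prod_degree_sq {V : Type*} [Fintype V] (G : SimpleGraph V)
    [DecidableRel G.Adj] : multZagreb1 G = (∏ v, G.degree v) ^ 2 := by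
  rw [multZagreb1, prod_pow]
  congr!

theorem SimpleGraph.Iso.multZagreb1_eq_s14 {V W : Type*} [Fintype V] [Fintype W] {G : SimpleGraph V}
    {G' : SimpleGraph W} (e : G ≃g G') : multZagreb1 G = multZagreb1 G' := by
  classical
  rw [multZagreb1_eq_prod_degree_sq, multZagreb1_eq_prod_degree_sq, ← e.toEquiv.prod_comp]
  simp

theorem multZagreb1_starGraph {V : Type*} [Fintype V] (r : V) :
    multZagreb1 (starGraph r) = (Fintype.card V - 1) ^ 2 := by
  classical
  rw [multZagreb1_eq_prod_degree_sq, prod_degree_starGraph]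

/-- **Theorem 3 for `Π₁` (Wang).** A connected graph `G` on `n ≥ 2` vertices
satisfies `Π₁(G) ≥ (n-1)²`, with equality iff `G` is the star
`S_n = K_{1,n-1}`. -/
theorem multZagreb1_ge_star {V : Type*} [Fintype V] (n : ℕ) (hn : 2 ≤ n)
    (G : SimpleGraph V) (hV : Fintype.card V = n) (hG : G.Connected) :
    (n - 1) ^ 2 ≤ multZagreb1 G ∧
      (multZagreb1 G = (n - 1) ^ 2 ↔
        Nonempty (G ≃g completeBipartiteGraph Unit (Fin (n - 1)))) := by
  classical
  subst hV
  have : Nontrivial V := Fintype.one_lt_card_iff_nontrivial.mp hn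
  have hstar : Fintype.card (Unit ⊕ Fin (Fintype.card V - 1)) = Fintype.card V := by
    simp only [Fintype.card_sum, Fintype.card_unit, Fintype.card_fin]
    omega
  rw [completeBipartiteGraph_unit_eq_starGraph, multZagreb1_eq_prod_degree_sq]
  refine ⟨Nat.pow_le_pow_left hG.card_sub_one_le_prod_degree 2, fun h => ?_, fun ⟨e⟩ => ?_⟩
  · obtain ⟨c, rfl⟩ :=
      hG.exists_eq_starGraph_of_prod_degree_eq (Nat.pow_left_injective two_ne_zero h)
    exact nonempty_iso_starGraph_of_card_eq c _ hstar.symm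
  · rw [← multZagreb1_eq_prod_degree_sq, e.multZagreb1_eq_s14, multZagreb1_starGraph, hstar]
end

section
/- Let T be a tree on n ≥ 2 vertices that is not isomorphic to the path P_n. Then Π₂(T) > 4^{n−2} = Π₂(P_n). -/
/-- Auxiliary two-step recursion: `(f k, f (k+1))` where `f 0 = a`, `f 1 = b`,
`f (k+2) = g (f k) (f (k+1))`. -/
def chainAux {V : Type*} (g : V → V → V) (a b : V) (k : ℕ) : V × V :=
  Nat.rec (a, b) (fun _ p => (p.2, g p.1 p.2)) k

lemma pow_four_le {d : ℕ} (hd : 1 ≤ d) : 4 ^ (d - 1) ≤ d ^ d := by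
  rcases le_or_gt d 3 with h | h
  · interval_cases d <;> norm_num
  · calc 4 ^ (d - 1) ≤ 4 ^ d := Nat.pow_le_pow_right (by norm_num) (by omega)
      _ ≤ d ^ d := Nat.pow_le_pow_left (by omega) d

lemma pow_four_lt {d : ℕ} (hd : 3 ≤ d) : 4 ^ (d - 1) < d ^ d := by
  rcases eq_or_lt_of_le hd with rfl | h
  · norm_num
  · calc 4 ^ (d - 1) < 4 ^ d := Nat.pow_lt_pow_right (by norm_num) (by omega)
      _ ≤ d ^ d := Nat.pow_le_pow_left (by omega) d

lemma pathGraph_degree {n : ℕ} (hn : 2 ≤ n) [DecidableRel (SimpleGraph.pathGraph n).Adj]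
    (v : Fin n) :
    (SimpleGraph.pathGraph n).degree v = if v.val = 0 ∨ v.val = n - 1 then 1 else 2 := by
  classical
  rw [← SimpleGraph.card_neighborFinset_eq_degree]
  split_ifs with h
  · rcases h with h | h
    · have : (SimpleGraph.pathGraph n).neighborFinset v = {⟨1, by omega⟩} := by
        ext u
        simp only [SimpleGraph.mem_neighborFinset, SimpleGraph.pathGraph_adj,
          Finset.mem_singleton, Fin.ext_iff]
        omega
      rw [this]; simp
    · have : (SimpleGraph.pathGraph n).neighborFinset v = {⟨n - 2, by omega⟩} := by
        ext u
        have := u.isLt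
        simp only [SimpleGraph.mem_neighborFinset, SimpleGraph.pathGraph_adj,
          Finset.mem_singleton, Fin.ext_iff]
        omega
      rw [this]; simp
  · push_neg at h
    have hv := v.isLt
    have : (SimpleGraph.pathGraph n).neighborFinset v
        = {⟨v.val - 1, by omega⟩, ⟨v.val + 1, by omega⟩} := by
      ext u
      have := u.isLt
      simp only [SimpleGraph.mem_neighborFinset, SimpleGraph.pathGraph_adj,
        Finset.mem_insert, Finset.mem_singleton, Fin.ext_iff]
      omega
    rw [this, Finset.card_insert_of_notMem
      (by simp only [Finset.mem_singleton, Fin.ext_iff]; omega), Finset.card_singleton]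

section Tree

variable {V : Type*} [Fintype V] {n : ℕ}

/-- A tree with max degree ≤ 2 on `n ≥ 2` vertices is isomorphic to the path graph. -/
lemma tree_maxdeg_two_iso (hn : 2 ≤ n) (T : SimpleGraph V) [DecidableRel T.Adj]
    (hV : Fintype.card V = n) (hT : T.IsTree) (hd : ∀ v, T.degree v ≤ 2) :
    Nonempty (T ≃g SimpleGraph.pathGraph n) := by
  classical
  have hdpos : ∀ v, 0 < T.degree v := by
    intro v
    rw [SimpleGraph.degree_pos_iff_exists_adj]
    obtain ⟨u, hu⟩ := Fintype.exists_ne_of_one_lt_card (by omega) v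
    obtain ⟨p⟩ := hT.isConnected.preconnected v u
    cases p with
    | nil => exact absurd rfl hu
    | cons h _ => exact ⟨_, h⟩
  have hsum : ∑ v, T.degree v = 2 * (n - 1) := by
    rw [SimpleGraph.sum_degrees_eq_twice_card_edges]
    have := hT.card_edgeFinset
    rw [hV] at this
    omega
  -- there is a leaf
  have hleaf : ∃ a, T.degree a = 1 := by
    by_contra h
    push_neg at h
    have h2 : ∀ v : V, 2 ≤ T.degree v := fun v => by
      have := hdpos v; have := h v; omega
    have : 2 * n ≤ ∑ v, T.degree v := by
      calc 2 * n = ∑ _v : V, 2 := by rw [Finset.sum_const, Finset.card_univ, hV]; ring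
        _ ≤ ∑ v, T.degree v := Finset.sum_le_sum fun v _ => h2 v
    omega
  obtain ⟨a, ha⟩ := hleaf
  obtain ⟨b, hb⟩ : (T.neighborFinset a).Nonempty := by
    rw [← Finset.card_pos, SimpleGraph.card_neighborFinset_eq_degree, ha]; norm_num
  have hab : T.Adj a b := (SimpleGraph.mem_neighborFinset _ _ _).mp hb
  set g : V → V → V := fun u v =>
    if h : ((T.neighborFinset v).erase u).Nonempty then h.choose else u with hg
  set f : ℕ → V := fun k => (chainAux g a b k).1 with hf
  have hf0 : f 0 = a := rfl
  have hf1 : f 1 = b := rfl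
  have hfstep : ∀ k, f (k + 2) = g (f k) (f (k + 1)) := fun k => rfl
  have hnbra : T.neighborFinset a = {b} := by
    refine (Finset.eq_of_subset_of_card_le (Finset.singleton_subset_iff.mpr hb) ?_).symm
    rw [SimpleGraph.card_neighborFinset_eq_degree, ha, Finset.card_singleton]
  -- known neighborhoods of interior vertices of a partial chain
  have hnbr : ∀ k, (∀ i < k, T.Adj (f i) (f (i + 1))) →
      (∀ i j, i ≤ k → j ≤ k → f i = f j → i = j) →
      ∀ i, i + 2 ≤ k → T.neighborFinset (f (i + 1)) = {f i, f (i + 2)} := by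
    intro k hadj hinj i hi
    have h1 : T.Adj (f i) (f (i + 1)) := hadj i (by omega)
    have h2 : T.Adj (f (i + 1)) (f (i + 2)) := hadj (i + 1) (by omega)
    have hne : f i ≠ f (i + 2) := fun h => by
      have := hinj i (i + 2) (by omega) (by omega) h; omega
    refine (Finset.eq_of_subset_of_card_le ?_ ?_).symm
    · intro u hu
      rw [Finset.mem_insert, Finset.mem_singleton] at hu
      rcases hu with rfl | rfl
      · exact (SimpleGraph.mem_neighborFinset _ _ _).mpr h1.symm
      · exact (SimpleGraph.mem_neighborFinset _ _ _).mpr h2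
    · rw [Finset.card_insert_of_notMem (by simpa using hne), Finset.card_singleton,
        SimpleGraph.card_neighborFinset_eq_degree]
      exact hd _
  -- closure under adjacency
  have hclosure : ∀ (S : Set V), a ∈ S → (∀ u ∈ S, ∀ v, T.Adj u v → v ∈ S) →
      ∀ v, v ∈ S := by
    intro S haS hcl v
    have H : ∀ (u : V) (_p : T.Walk u v), u ∈ S → v ∈ S := by
      intro u p
      induction p with
      | nil => exact id
      | cons h q ih => intro hu; exact ih (hcl _ hu _ h)
    exact H a (hT.isConnected.preconnected a v).some haS
  -- the main invariant
  have main : ∀ k, k ≤ n - 1 →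
      (∀ i < k, T.Adj (f i) (f (i + 1))) ∧
      (∀ i j, i ≤ k → j ≤ k → f i = f j → i = j) := by
    intro k
    induction k with
    | zero => exact fun _ => ⟨fun i h => absurd h (by omega), fun i j hi hj _ => by omega⟩
    | succ m ih =>
      intro hm
      obtain ⟨hadj, hinj⟩ := ih (by omega)
      rcases Nat.eq_zero_or_pos m with rfl | hmpos
      · refine ⟨?_, ?_⟩
        · intro i hi
          interval_cases i
          simpa [hf0, hf1] using hab
        · intro i j hi hj hij
          interval_cases i <;> interval_cases j <;>
            first
              | rfl
              | (exact absurd hij (by simp [hf0, hf1]; exact hab.ne))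
              | (exact absurd hij.symm (by simp [hf0, hf1]; exact hab.ne))
      · obtain ⟨t, rfl⟩ : ∃ t, m = t + 1 := ⟨m - 1, by omega⟩
        -- f (t+1) is not a leaf
        have hdeg2 : 2 ≤ T.degree (f (t + 1)) := by
          by_contra hlt
          have hd1 : T.degree (f (t + 1)) = 1 := by have := hdpos (f (t + 1)); omega
          have hnb : T.neighborFinset (f (t + 1)) = {f t} := by
            refine (Finset.eq_of_subset_of_card_le (Finset.singleton_subset_iff.mpr
              ((SimpleGraph.mem_neighborFinset _ _ _).mpr (hadj t (by omega)).symm)) ?_).symm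
            rw [SimpleGraph.card_neighborFinset_eq_degree, hd1, Finset.card_singleton]
          have hS : ∀ v : V, v ∈ {v : V | ∃ i ≤ t + 1, f i = v} := by
            refine hclosure _ ⟨0, by omega, hf0⟩ ?_
            rintro u ⟨i, hi, rfl⟩ v huv
            have hvmem : v ∈ T.neighborFinset (f i) :=
              (SimpleGraph.mem_neighborFinset _ _ _).mpr huv
            rcases Nat.eq_zero_or_pos i with rfl | hipos
            · rw [hf0, hnbra, Finset.mem_singleton] at hvmem
              exact ⟨1, by omega, by rw [hf1, hvmem]⟩
            · rcases eq_or_lt_of_le hi with rfl | hilt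
              · rw [hnb, Finset.mem_singleton] at hvmem
                exact ⟨t, by omega, hvmem.symm⟩
              · obtain ⟨s, rfl⟩ : ∃ s, i = s + 1 := ⟨i - 1, by omega⟩
                rw [hnbr (t + 1) hadj hinj s (by omega), Finset.mem_insert,
                  Finset.mem_singleton] at hvmem
                rcases hvmem with rfl | rfl
                · exact ⟨s, by omega, rfl⟩
                · exact ⟨s + 2, by omega, rfl⟩
          have hsub : (Finset.univ : Finset V) ⊆ (Finset.range (t + 2)).image f := by
            intro v _
            obtain ⟨i, hi, rfl⟩ := hS v
            exact Finset.mem_image.mpr ⟨i, Finset.mem_range.mpr (by omega), rfl⟩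
          have h1 := Finset.card_le_card hsub
          have h2 := Finset.card_image_le (s := Finset.range (t + 2)) (f := f)
          rw [Finset.card_univ, hV] at h1
          rw [Finset.card_range] at h2
          omega
        have htmem : f t ∈ T.neighborFinset (f (t + 1)) :=
          (SimpleGraph.mem_neighborFinset _ _ _).mpr (hadj t (by omega)).symm
        have hkey : ((T.neighborFinset (f (t + 1))).erase (f t)).Nonempty := by
          rw [← Finset.card_pos, Finset.card_erase_of_mem htmem,
            SimpleGraph.card_neighborFinset_eq_degree]
          omega
        have hstep : f (t + 2) ∈ (T.neighborFinset (f (t + 1))).erase (f t) := by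
          rw [hfstep t]
          show (if h : ((T.neighborFinset (f (t+1))).erase (f t)).Nonempty
            then h.choose else f t) ∈ _
          rw [dif_pos hkey]
          exact hkey.choose_spec
        obtain ⟨hne_t, hmem_t⟩ := Finset.mem_erase.mp hstep
        have hadjlast : T.Adj (f (t + 1)) (f (t + 2)) :=
          (SimpleGraph.mem_neighborFinset _ _ _).mp hmem_t
        have hadj' : ∀ i < t + 2, T.Adj (f i) (f (i + 1)) := by
          intro i hi
          rcases lt_or_eq_of_le (by omega : i ≤ t + 1) with h | rfl
          · exact hadj i h
          · exact hadjlast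
        have hnew : ∀ j ≤ t + 1, f (t + 2) ≠ f j := by
          intro j hj heq
          rcases eq_or_lt_of_le hj with rfl | hjlt
          · exact hadjlast.ne heq.symm
          rcases eq_or_lt_of_le (by omega : j ≤ t) with rfl | hjlt'
          · exact hne_t heq
          -- j < t
          have hmem' : f (t + 1) ∈ T.neighborFinset (f j) :=
            (SimpleGraph.mem_neighborFinset _ _ _).mpr (heq ▸ hadjlast).symm
          rcases Nat.eq_zero_or_pos j with rfl | hjpos
          · rw [hf0, hnbra, Finset.mem_singleton, ← hf1] at hmem'
            have := hinj (t + 1) 1 (by omega) (by omega) hmem'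
            omega
          · obtain ⟨s, rfl⟩ : ∃ s, j = s + 1 := ⟨j - 1, by omega⟩
            rw [hnbr (t + 1) hadj hinj s (by omega), Finset.mem_insert,
              Finset.mem_singleton] at hmem'
            rcases hmem' with h' | h'
            · have := hinj (t + 1) s (by omega) (by omega) h'; omega
            · have := hinj (t + 1) (s + 2) (by omega) (by omega) h'; omega
        refine ⟨hadj', ?_⟩
        intro i j hi hj hij
        rcases eq_or_lt_of_le hi with rfl | hi' <;> rcases eq_or_lt_of_le hj with rfl | hj'
        · rfl
        · exact absurd hij (hnew j (by omega))
        · exact absurd hij.symm (hnew i (by omega))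
        · exact hinj i j (by omega) (by omega) hij
  obtain ⟨hadj, hinj⟩ := main (n - 1) le_rfl
  set F : Fin n → V := fun i => f i.val with hF
  have hFinj : Function.Injective F := by
    intro i j h
    exact Fin.ext (hinj i.val j.val (by omega) (by omega) h)
  have hFbij : Function.Bijective F :=
    (Fintype.bijective_iff_injective_and_card F).mpr ⟨hFinj, by simp [hV]⟩
  have hsurj : ∀ v : V, ∃ i : ℕ, i ≤ n - 1 ∧ f i = v := by
    intro v
    obtain ⟨i, rfl⟩ := hFbij.surjective v
    exact ⟨i.val, by omega, rfl⟩
  refine ⟨SimpleGraph.Iso.symm ⟨Equiv.ofBijective F hFbij, ?_⟩⟩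
  intro i j
  show T.Adj (f i.val) (f j.val) ↔ (SimpleGraph.pathGraph n).Adj i j
  rw [SimpleGraph.pathGraph_adj]
  have hiv := i.isLt
  have hjv := j.isLt
  constructor
  · intro hA
    have hmem : f j.val ∈ T.neighborFinset (f i.val) :=
      (SimpleGraph.mem_neighborFinset _ _ _).mpr hA
    rcases Nat.eq_zero_or_pos i.val with h0 | hipos
    · rw [h0, hf0, hnbra, Finset.mem_singleton, ← hf1] at hmem
      have := hinj j.val 1 (by omega) (by omega) hmem
      omega
    · rcases lt_or_eq_of_le (by omega : i.val ≤ n - 1) with hilt | hieq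
      · obtain ⟨s, hs⟩ : ∃ s, i.val = s + 1 := ⟨i.val - 1, by omega⟩
        rw [hs, hnbr (n - 1) hadj hinj s (by omega), Finset.mem_insert,
          Finset.mem_singleton] at hmem
        rcases hmem with h' | h'
        · have := hinj j.val s (by omega) (by omega) h'; omega
        · have := hinj j.val (s + 2) (by omega) (by omega) h'; omega
      · -- i.val = n - 1 : show j.val = n - 2
        by_cases hj2 : j.val + 1 = n - 1
        · omega
        · exfalso
          have hmem' : f i.val ∈ T.neighborFinset (f j.val) :=
            (SimpleGraph.mem_neighborFinset _ _ _).mpr hA.symm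
          rcases Nat.eq_zero_or_pos j.val with h0 | hjpos
          · rw [h0, hf0, hnbra, Finset.mem_singleton, ← hf1] at hmem'
            have := hinj i.val 1 (by omega) (by omega) hmem'
            have : i.val = j.val := by omega
            exact hA.ne (by rw [this])
          · have hjlt : j.val < n - 1 := by
              rcases lt_or_eq_of_le (by omega : j.val ≤ n - 1) with h | h
              · exact h
              · exact absurd (congrArg f (hieq.trans h.symm)) hA.ne
            obtain ⟨s, hs⟩ : ∃ s, j.val = s + 1 := ⟨j.val - 1, by omega⟩
            rw [hs, hnbr (n - 1) hadj hinj s (by omega), Finset.mem_insert,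
              Finset.mem_singleton] at hmem'
            rcases hmem' with h' | h'
            · have := hinj i.val s (by omega) (by omega) h'; omega
            · have := hinj i.val (s + 2) (by omega) (by omega) h'; omega
  · rintro (h | h)
    · have := hadj i.val (by omega)
      rwa [show i.val + 1 = j.val from h] at this
    · have := hadj j.val (by omega)
      rw [show j.val + 1 = i.val from h] at this
      exact this.symm

end Tree

/-- If `T` is a tree on `n ≥ 2` vertices not isomorphic to the path `P_n`, then
`Π₂(T) > 4^{n-2} = Π₂(P_n)`. -/
theorem multZagreb2_tree_gt_path {V : Type*} [Fintype V] (n : ℕ) (hn : 2 ≤ n)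
    (T : SimpleGraph V) (hV : Fintype.card V = n) (hT : T.IsTree)
    (hP : IsEmpty (T ≃g SimpleGraph.pathGraph n)) :
    4 ^ (n - 2) < multZagreb2 T ∧
      multZagreb2 (SimpleGraph.pathGraph n) = 4 ^ (n - 2) := by
  classical
  constructor
  · -- the strict inequality
    letI : DecidableRel T.Adj := Classical.decRel T.Adj
    show 4 ^ (n - 2) < ∏ v : V, (T.degree v) ^ (T.degree v)
    have hdpos : ∀ v, 0 < T.degree v := by
      intro v
      rw [SimpleGraph.degree_pos_iff_exists_adj]
      obtain ⟨u, hu⟩ := Fintype.exists_ne_of_one_lt_card (by omega) v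
      obtain ⟨p⟩ := hT.isConnected.preconnected v u
      cases p with
      | nil => exact absurd rfl hu
      | cons h _ => exact ⟨_, h⟩
    have hsum : ∑ v, T.degree v = 2 * (n - 1) := by
      rw [SimpleGraph.sum_degrees_eq_twice_card_edges]
      have := hT.card_edgeFinset
      rw [hV] at this
      omega
    have hbig : ∃ w : V, 3 ≤ T.degree w := by
      by_contra h
      push_neg at h
      exact hP.false (tree_maxdeg_two_iso hn T hV hT fun v => by have := h v; omega).some
    obtain ⟨w, hw⟩ := hbig
    have h2 : ∑ v : V, (T.degree v - 1) = n - 2 := by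
      rw [Finset.sum_tsub_distrib Finset.univ (fun v _ => hdpos v), hsum]
      simp only [Finset.sum_const, smul_eq_mul, mul_one, Finset.card_univ, hV]
      omega
    have h1 : 4 ^ (n - 2) = ∏ v : V, 4 ^ (T.degree v - 1) := by
      rw [Finset.prod_pow_eq_pow_sum, h2]
    rw [h1]
    refine Finset.prod_lt_prod (fun v _ => by positivity)
      (fun v _ => pow_four_le (hdpos v)) ⟨w, Finset.mem_univ w, pow_four_lt hw⟩
  · -- value for the path graph
    letI : DecidableRel (SimpleGraph.pathGraph n).Adj :=
      Classical.decRel (SimpleGraph.pathGraph n).Adj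
    show (∏ v : Fin n, (SimpleGraph.pathGraph n).degree v ^ (SimpleGraph.pathGraph n).degree v)
      = 4 ^ (n - 2)
    have h1 : ∀ v : Fin n,
        (SimpleGraph.pathGraph n).degree v ^ (SimpleGraph.pathGraph n).degree v
          = if v.val = 0 ∨ v.val = n - 1 then 1 else 4 := by
      intro v
      rw [pathGraph_degree hn v]
      split_ifs <;> norm_num
    rw [Finset.prod_congr rfl fun v _ => h1 v, Finset.prod_ite, Finset.prod_const,
      Finset.prod_const, one_pow, one_mul]
    congr 1
    have hfilter : (Finset.univ.filter fun v : Fin n => v.val = 0 ∨ v.val = n - 1)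
        = {⟨0, by omega⟩, ⟨n - 1, by omega⟩} := by
      ext v
      simp only [Finset.mem_filter, Finset.mem_univ, true_and, Finset.mem_insert,
        Finset.mem_singleton, Fin.ext_iff]
    have hcard2 : (Finset.univ.filter fun v : Fin n => v.val = 0 ∨ v.val = n - 1).card = 2 := by
      rw [hfilter, Finset.card_insert_of_notMem
        (by simp only [Finset.mem_singleton, Fin.ext_iff]; omega), Finset.card_singleton]
    have := Finset.card_filter_add_card_filter_not
      (s := (Finset.univ : Finset (Fin n))) (p := fun v : Fin n => v.val = 0 ∨ v.val = n - 1)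
    rw [Finset.card_univ, Fintype.card_fin, hcard2] at this
    omega
end
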